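/- arXiv:2501.11303 — 5 statements merged into one kernel-verified Lean document; each statement's English description precedes it below -/
import Mathlib

section
/- Let k=(k_1,…,k_r) be a composition and let m∈ℕ_0. Then η(m+1;k) = ((−1)^{m−1}/m!)·∫_0^1 log^m(1−x)·Li_k(x/(x−1))/x dx. -/
open scoped BigOperators
open MeasureTheory

/-- Multiple polylogarithm `Li_k(z) = Σ_{n₁>⋯>n_r>0} z^{n₁}/(n₁^{k₁}⋯n_r^{k_r})`. -/
noncomputable def MPL (k : List ℕ) (z : ℝ) : ℝ :=
  if h : 0 < k.length then
    ∑' n : {n : Fin k.length → ℕ // StrictAnti n ∧ ∀ i, 0 < n i},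
      z ^ (n.1 ⟨0, h⟩) / ∏ i, (n.1 i : ℝ) ^ k.get i
  else 1

/-- Level-two multiple polylogarithm
`A(k;x) = 2^r Σ_{n₁>⋯>n_r>0, n_j ≡ r+1-j (mod 2)} x^{n₁}/(n₁^{k₁}⋯n_r^{k_r})`. -/
noncomputable def AFn (k : List ℕ) (x : ℝ) : ℝ :=
  if h : 0 < k.length then
    2 ^ k.length *
      ∑' n : {n : Fin k.length → ℕ //
          StrictAnti n ∧ (∀ i, 0 < n i) ∧ ∀ i, n i % 2 = (k.length - i.val) % 2},
        x ^ (n.1 ⟨0, h⟩) / ∏ i, (n.1 i : ℝ) ^ k.get i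
  else 1

/-- Multiple zeta value `ζ(k) = Σ_{n₁>⋯>n_r>0} ∏ 1/n_i^{k_i}`. -/
noncomputable def MZV (k : List ℕ) : ℝ :=
  ∑' n : {n : Fin k.length → ℕ // StrictAnti n ∧ ∀ i, 0 < n i},
    ∏ i, 1 / (n.1 i : ℝ) ^ k.get i

/-- Multiple zeta star value `ζ⋆(k) = Σ_{n₁≥⋯≥n_r>0} ∏ 1/n_i^{k_i}`. -/
noncomputable def MZSV (k : List ℕ) : ℝ :=
  ∑' n : {n : Fin k.length → ℕ // Antitone n ∧ ∀ i, 0 < n i},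
    ∏ i, 1 / (n.1 i : ℝ) ^ k.get i

/-- Multiple T-value `T(k) = 2^r Σ_{n₁>⋯>n_r>0, n_j ≡ r+1-j (mod 2)} ∏ 1/n_i^{k_i}`. -/
noncomputable def MTV (k : List ℕ) : ℝ :=
  2 ^ k.length *
    ∑' n : {n : Fin k.length → ℕ //
        StrictAnti n ∧ (∀ i, 0 < n i) ∧ ∀ i, n i % 2 = (k.length - i.val) % 2},
      ∏ i, 1 / (n.1 i : ℝ) ^ k.get i

/-- Hurwitz-type multiple zeta value `ζ(k;α) = Σ_{n₁>⋯>n_r>0} ∏ (n_i+α-1)^{-k_i}`. -/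
noncomputable def HMZV (k : List ℕ) (α : ℂ) : ℂ :=
  ∑' n : {n : Fin k.length → ℕ // StrictAnti n ∧ ∀ i, 0 < n i},
    ∏ i, ((n.1 i : ℂ) + α - 1) ^ (-(k.get i : ℤ))

/-- Hurwitz-type multiple zeta star value `ζ⋆(k;α) = Σ_{n₁≥⋯≥n_r>0} ∏ (n_i+α-1)^{-k_i}`. -/
noncomputable def HMZSV (k : List ℕ) (α : ℂ) : ℂ :=
  ∑' n : {n : Fin k.length → ℕ // Antitone n ∧ ∀ i, 0 < n i},
    ∏ i, ((n.1 i : ℂ) + α - 1) ^ (-(k.get i : ℤ))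

/-- Hurwitz-type multiple T-value
`T(k;α) = Σ_{m₁>⋯>m_r>0} 2^r ∏_i (2m_i - r - 2 + i + α)^{-k_i}` (1-indexed `i`). -/
noncomputable def HMTV (k : List ℕ) (α : ℂ) : ℂ :=
  ∑' n : {n : Fin k.length → ℕ // StrictAnti n ∧ ∀ i, 0 < n i},
    2 ^ k.length *
      ∏ i, (2 * (n.1 i : ℂ) - (k.length : ℂ) - 1 + (i.val : ℂ) + α) ^ (-(k.get i : ℤ))

/-- The boolean word (sequence of bits between consecutive units) of a composition. -/
def toWord : List ℕ → List Bool
  | [] => []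
  | [a] => List.replicate (a - 1) false
  | a :: b :: rest => List.replicate (a - 1) false ++ true :: toWord (b :: rest)

/-- The composition corresponding to a boolean word. -/
def fromWord : List Bool → List ℕ
  | [] => [1]
  | false :: w =>
    match fromWord w with
    | [] => [1]
    | a :: t => (a + 1) :: t
  | true :: w => 1 :: fromWord w

/-- Hoffman dual of a composition: swap commas and plus signs in
`k = (1+⋯+1, …, 1+⋯+1)`. -/
def HDual (k : List ℕ) : List ℕ := fromWord ((toWord k).map fun b => !b)

/-- `k₊ = (k₁+1, k₂, …, k_r)`. -/
def plusOne : List ℕ → List ℕ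
  | [] => []
  | a :: t => (a + 1) :: t

/-- `Refines l k` means the composition `k` can be obtained from `l`
by combining some consecutive parts of `l`, i.e. `l ⪰ k`. -/
inductive Refines : List ℕ → List ℕ → Prop
  | nil : Refines [] []
  | cons (b l k : List ℕ) : b ≠ [] → Refines l k → Refines (b ++ l) (b.sum :: k)

/-- Arakawa–Kaneko zeta function `ξ(s;k) = (1/Γ(s)) ∫_0^∞ t^{s-1}/(e^t-1) Li_k(1-e^{-t}) dt`. -/
noncomputable def xiAK (s : ℂ) (k : List ℕ) : ℂ :=
  (1 / Complex.Gamma s) *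
    ∫ t in Set.Ioi (0 : ℝ),
      (t : ℂ) ^ (s - 1) / ((Real.exp t : ℂ) - 1) * (MPL k (1 - Real.exp (-t)) : ℂ)

/-- Kaneko–Tsumura η-function `η(s;k) = (1/Γ(s)) ∫_0^∞ t^{s-1}/(1-e^t) Li_k(1-e^{t}) dt`. -/
noncomputable def etaKT (s : ℂ) (k : List ℕ) : ℂ :=
  (1 / Complex.Gamma s) *
    ∫ t in Set.Ioi (0 : ℝ),
      (t : ℂ) ^ (s - 1) / (1 - (Real.exp t : ℂ)) * (MPL k (1 - Real.exp t) : ℂ)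

/-- Kaneko–Tsumura ψ-function `ψ(s;k) = (1/Γ(s)) ∫_0^∞ t^{s-1} A(k; tanh(t/2))/sinh(t) dt`. -/
noncomputable def psiKT (s : ℂ) (k : List ℕ) : ℂ :=
  (1 / Complex.Gamma s) *
    ∫ t in Set.Ioi (0 : ℝ),
      (t : ℂ) ^ (s - 1) * ((AFn k (Real.tanh (t / 2)) / Real.sinh t : ℝ) : ℂ)

/-- Riemann zeta value `ζ(a) = Σ_{n>0} 1/n^a`. -/
noncomputable def zeta1 (a : ℕ) : ℝ := ∑' n : {n : ℕ // 0 < n}, 1 / (n.1 : ℝ) ^ a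

/-- Double zeta value `ζ(a,b) = Σ_{n₁>n₂>0} 1/(n₁^a n₂^b)`. -/
noncomputable def zeta2 (a b : ℕ) : ℝ :=
  ∑' p : {p : ℕ × ℕ // p.2 < p.1 ∧ 0 < p.2}, 1 / ((p.1.1 : ℝ) ^ a * (p.1.2 : ℝ) ^ b)

/-- Single T-value `T(a) = 2 Σ_{n>0 odd} 1/n^a`. -/
noncomputable def T1 (a : ℕ) : ℝ := 2 * ∑' n : {n : ℕ // 0 < n ∧ n % 2 = 1}, 1 / (n.1 : ℝ) ^ a

/-- Double T-value `T(a,b) = 4 Σ_{n₁>n₂>0, n₁ even, n₂ odd} 1/(n₁^a n₂^b)`. -/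
noncomputable def T2 (a b : ℕ) : ℝ :=
  4 * ∑' p : {p : ℕ × ℕ // p.2 < p.1 ∧ 0 < p.2 ∧ p.1 % 2 = 0 ∧ p.2 % 2 = 1},
    1 / ((p.1.1 : ℝ) ^ a * (p.1.2 : ℝ) ^ b)


theorem stmt7 (k : List ℕ) (hk : k ≠ []) (hkpos : ∀ a ∈ k, 0 < a) (m : ℕ) :
    etaKT (m + 1) k =
      ((-1 : ℂ) ^ ((m : ℤ) - 1) / (Nat.factorial m : ℂ)) *
        ((∫ x in (0:ℝ)..1, Real.log (1 - x) ^ m * MPL k (x / (x - 1)) / x : ℝ) : ℂ) := by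
  classical
  set g : ℝ → ℝ := fun t => t ^ m / (1 - Real.exp t) * MPL k (1 - Real.exp t) with hg
  set f : ℝ → ℝ := fun x => Real.log (1 - x) ^ m * MPL k (x / (x - 1)) / x with hf
  set I : ℝ := ∫ t in Set.Ioi (0:ℝ), g t with hI
  -- Left-hand side
  have hLHS : etaKT (m + 1) k = (1 / (Nat.factorial m : ℂ)) * (I : ℂ) := by
    rw [etaKT]
    have hGamma : Complex.Gamma ((m:ℂ) + 1) = (Nat.factorial m : ℂ) :=
      Complex.Gamma_nat_eq_factorial m
    have hfun : ∀ t : ℝ,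
        (t : ℂ) ^ ((m:ℂ) + 1 - 1) / (1 - (Real.exp t : ℂ)) * (MPL k (1 - Real.exp t) : ℂ)
          = ((g t : ℝ) : ℂ) := by
      intro t
      rw [show ((m:ℂ) + 1 - 1) = ((m:ℕ) : ℂ) by ring, Complex.cpow_natCast]
      simp only [hg]
      push_cast
      ring
    rw [hGamma]
    congr 1
    simp only [hfun]
    exact integral_ofReal
  -- substitution φ t = 1 - exp (-t)
  set φ : ℝ → ℝ := fun t => 1 - Real.exp (-t) with hφ
  have himg : φ '' Set.Ioi 0 = Set.Ioo (0:ℝ) 1 := by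
    ext x
    constructor
    · rintro ⟨t, ht, rfl⟩
      have ht : (0:ℝ) < t := ht
      have h1 : Real.exp (-t) < 1 := by
        rw [show (1:ℝ) = Real.exp 0 by simp]
        exact Real.exp_lt_exp.mpr (by linarith)
      have h2 : 0 < Real.exp (-t) := Real.exp_pos _
      exact ⟨by simp [hφ]; linarith, by simp [hφ]; linarith⟩
    · rintro ⟨hx0, hx1⟩
      refine ⟨-Real.log (1 - x), ?_, ?_⟩
      · have : Real.log (1 - x) < 0 :=
          Real.log_neg (by linarith) (by linarith)
        simpa using this
      · simp only [hφ, neg_neg]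
        rw [Real.exp_log (by linarith)]
        ring
  have hderiv : ∀ t ∈ Set.Ioi (0:ℝ),
      HasDerivWithinAt φ (Real.exp (-t)) (Set.Ioi 0) t := by
    intro t _
    have h1 : HasDerivAt (fun t : ℝ => Real.exp (-t)) (Real.exp (-t) * (-1)) t :=
      (Real.hasDerivAt_exp (-t)).comp t ((hasDerivAt_id t).neg)
    have h2 : HasDerivAt φ (0 - Real.exp (-t) * (-1)) t :=
      (hasDerivAt_const t (1:ℝ)).sub h1
    have h3 : HasDerivAt φ (Real.exp (-t)) t := by simpa using h2
    exact h3.hasDerivWithinAt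
  have hinj : Set.InjOn φ (Set.Ioi 0) := by
    intro a _ b _ hab
    have : Real.exp (-a) = Real.exp (-b) := by
      simp only [hφ] at hab; linarith
    have := Real.exp_injective this
    linarith
  have hsub := integral_image_eq_integral_abs_deriv_smul measurableSet_Ioi hderiv hinj f
  rw [himg] at hsub
  -- the interval integral
  have hJ : (∫ x in (0:ℝ)..1, f x) = (-1:ℝ) ^ (m+1) * I := by
    rw [intervalIntegral.integral_of_le zero_le_one, integral_Ioc_eq_integral_Ioo, hsub]
    have hpt : ∀ t ∈ Set.Ioi (0:ℝ),
        |Real.exp (-t)| • f (φ t) = (-1:ℝ) ^ (m+1) * g t := by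
      intro t ht
      have ht : (0:ℝ) < t := ht
      have hE : (0:ℝ) < Real.exp t := Real.exp_pos t
      have hEne : Real.exp t ≠ 0 := ne_of_gt hE
      have h1 : Real.exp (-t) < 1 := by
        rw [show (1:ℝ) = Real.exp 0 by simp]
        exact Real.exp_lt_exp.mpr (by linarith)
      have h2 : (1:ℝ) < Real.exp t := by
        rw [show (1:ℝ) = Real.exp 0 by simp]
        exact Real.exp_lt_exp.mpr ht
      have hne1 : 1 - Real.exp (-t) ≠ 0 := ne_of_gt (by linarith)
      have hne2 : 1 - Real.exp t ≠ 0 := by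
        intro h; nlinarith
      have hne2' : -1 + Real.exp t ≠ 0 := ne_of_gt (by linarith)
      have hx : φ t = 1 - Real.exp (-t) := rfl
      have hlog : Real.log (1 - φ t) = -t := by
        simp [hφ, Real.log_exp]
      have hratio : φ t / (φ t - 1) = 1 - Real.exp t := by
        simp only [hφ]
        rw [Real.exp_neg]
        field_simp
        try ring
      rw [abs_of_pos (Real.exp_pos (-t)), smul_eq_mul, hf]
      simp only [hlog, hratio, hx, hg]
      rw [Real.exp_neg]
      field_simp
      have hne3 : Real.exp t - 1 ≠ 0 := ne_of_gt (by linarith)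
      have e1 : (Real.exp t - (Real.exp t - 1)) / Real.exp t = (Real.exp t)⁻¹ := by ring
      have e2 : (Real.exp t - 1) / (Real.exp t - 1 - Real.exp t) = 1 - Real.exp t := by
        rw [show Real.exp t - 1 - Real.exp t = -1 by ring, div_neg, div_one]; ring
      have e3 : (1 - Real.exp t) / (Real.exp t - 1) = -1 := by
        rw [div_eq_iff hne3]; ring
      rw [e1, e2, Real.log_inv, Real.log_exp, neg_pow t m, mul_div_assoc, e3]
      try ring
      try linear_combination (-(t ^ m * MPL k (1 - Real.exp t) * (-1:ℝ) ^ m)) * mul_inv_cancel₀ hne2'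
    exact (setIntegral_congr_fun measurableSet_Ioi hpt).trans (integral_const_mul _ _)
  rw [hLHS, hJ]
  push_cast
  have hsign : ((-1:ℂ)) ^ ((m:ℤ) - 1) * (-1:ℂ) ^ (m+1) = 1 := by
    have h1 : ((-1:ℂ)) ^ ((m:ℤ) - 1) = ((-1:ℂ)) ^ (m+1) := by
      rw [zpow_sub_one₀ (by norm_num : (-1:ℂ) ≠ 0), zpow_natCast, pow_succ]
      norm_num
    rw [h1, ← mul_pow]
    norm_num
  calc (1 / (Nat.factorial m : ℂ)) * (I : ℂ)
      = 1 * ((1 / (Nat.factorial m : ℂ)) * (I : ℂ)) := by ring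
    _ = (((-1:ℂ)) ^ ((m:ℤ) - 1) * (-1:ℂ) ^ (m+1)) * ((1 / (Nat.factorial m : ℂ)) * (I : ℂ)) := by
        rw [hsign]
    _ = (-1:ℂ) ^ ((m:ℤ) - 1) / (Nat.factorial m : ℂ) * ((-1:ℂ) ^ (m + 1) * (I:ℂ)) := by ring
end

section
/- Let k=(k_1,…,k_r) be a composition and let m∈ℕ_0. Then ψ(m+1;k) = ((−1)^m/m!)·∫_0^1 log^m((1−x)/(1+x))·A(k;x)/x dx. -/
open scoped BigOperators
open MeasureTheory

lemma tanh_hasDerivAt (u : ℝ) : HasDerivAt Real.tanh (1 - Real.tanh u ^ 2) u := by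
  have h := (Real.hasDerivAt_sinh u).div (Real.hasDerivAt_cosh u) (Real.cosh_pos u).ne'
  have he : (Real.cosh u * Real.cosh u - Real.sinh u * Real.sinh u) / Real.cosh u ^ 2
      = 1 - Real.tanh u ^ 2 := by
    rw [Real.tanh_eq_sinh_div_cosh, div_pow]
    have hc := (Real.cosh_pos u).ne'
    field_simp
  rw [he] at h
  exact h.congr_of_eventuallyEq
    (Filter.Eventually.of_forall fun x => Real.tanh_eq_sinh_div_cosh x)

lemma ratio_eq (t : ℝ) :
    (1 - Real.tanh (t/2)) / (1 + Real.tanh (t/2)) = Real.exp (-t) := by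
  have hc := (Real.cosh_pos (t/2)).ne'
  have h1 : 1 - Real.tanh (t/2) = Real.exp (-(t/2)) / Real.cosh (t/2) := by
    rw [Real.tanh_eq_sinh_div_cosh, ← Real.cosh_sub_sinh]; field_simp
  have h2 : 1 + Real.tanh (t/2) = Real.exp (t/2) / Real.cosh (t/2) := by
    rw [Real.tanh_eq_sinh_div_cosh, ← Real.cosh_add_sinh]; field_simp
  rw [h1, h2, div_div_div_comm, div_self hc, div_one, ← Real.exp_sub]
  ring_nf

lemma tanh_mem (t : ℝ) (ht : 0 < t) : Real.tanh (t/2) ∈ Set.Ioo (0:ℝ) 1 := by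
  have hc := Real.cosh_pos (t/2)
  have hs : 0 < Real.sinh (t/2) := Real.sinh_pos_iff.mpr (by linarith)
  constructor
  · rw [Real.tanh_eq_sinh_div_cosh]; positivity
  · rw [Real.tanh_eq_sinh_div_cosh, div_lt_one hc]
    have := Real.cosh_sub_sinh (t/2)
    have := Real.exp_pos (-(t/2))
    linarith

lemma tanh_image : (fun t => Real.tanh (t/2)) '' Set.Ioi 0 = Set.Ioo (0:ℝ) 1 := by
  apply Set.Subset.antisymm
  · rintro x ⟨t, ht, rfl⟩
    exact tanh_mem t ht
  · rintro x ⟨hx0, hx1⟩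
    refine ⟨Real.log ((1+x)/(1-x)), ?_, ?_⟩
    · exact Real.log_pos (by rw [lt_div_iff₀ (by linarith)]; linarith)
    · set t := Real.log ((1+x)/(1-x)) with htdef
      have ht : 0 < t := Real.log_pos (by rw [lt_div_iff₀ (by linarith)]; linarith)
      have hmem := tanh_mem t ht
      have hr := ratio_eq t
      have hden : (0:ℝ) < 1 - x := by linarith
      rw [Real.exp_neg, htdef, Real.exp_log (by positivity)] at hr
      have h1 : ((1+x)/(1-x))⁻¹ = (1-x)/(1+x) := by
        rw [inv_div]
      rw [h1] at hr
      set a := Real.tanh (t/2)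
      have ha1 : (0:ℝ) < 1 + a := by have := hmem.1; linarith
      have hx1' : (0:ℝ) < 1 + x := by linarith
      field_simp at hr
      nlinarith [hr]

lemma inj_tanh : Set.InjOn (fun t => Real.tanh (t/2)) (Set.Ioi 0) := by
  intro t1 _ t2 _ h
  have h1 := ratio_eq t1
  have h2 := ratio_eq t2
  simp only at h
  rw [h] at h1
  rw [h2] at h1
  have := Real.exp_injective h1.symm
  linarith [neg_injective this]

lemma key (k : List ℕ) (m : ℕ) :
    ∫ x in Set.Ioo (0:ℝ) 1, Real.log ((1-x)/(1+x))^m * AFn k x / x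
      = (-1:ℝ)^m * ∫ t in Set.Ioi (0:ℝ),
          t^m * (AFn k (Real.tanh (t/2)) / Real.sinh t) := by
  have hderiv : ∀ t ∈ Set.Ioi (0:ℝ),
      HasDerivWithinAt (fun t => Real.tanh (t/2)) ((1 - Real.tanh (t/2)^2) * (1/2))
        (Set.Ioi 0) t := by
    intro t _
    have h := (tanh_hasDerivAt (t/2)).comp t ((hasDerivAt_id t).div_const 2)
    exact h.hasDerivWithinAt
  rw [← tanh_image,
    MeasureTheory.integral_image_eq_integral_abs_deriv_smul measurableSet_Ioi hderiv inj_tanh,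
    ← MeasureTheory.integral_const_mul]
  refine MeasureTheory.setIntegral_congr_fun measurableSet_Ioi fun t ht => ?_
  have ht' : (0:ℝ) < t := ht
  have hmem := tanh_mem t ht'
  set a := Real.tanh (t/2) with hadef
  have hlog : Real.log ((1 - a)/(1 + a)) = -t := by
    rw [hadef, ratio_eq, Real.log_exp]
  have habs : |(1 - a^2) * (1/2)| = (1 - a^2) * (1/2) := by
    rw [abs_of_pos]; nlinarith [hmem.1, hmem.2]
  have hst : Real.sinh t = 2 * Real.sinh (t/2) * Real.cosh (t/2) := by
    rw [← Real.sinh_two_mul]; ring_nf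
  have hs : 0 < Real.sinh (t/2) := Real.sinh_pos_iff.mpr (by linarith)
  have hc := Real.cosh_pos (t/2)
  have hsinh : 0 < Real.sinh t := by rw [hst]; positivity
  have hkey : (1 - a^2) * (1/2) / a = 1 / Real.sinh t := by
    rw [hadef, Real.tanh_eq_sinh_div_cosh, hst, div_pow]
    field_simp
    nlinarith [Real.cosh_sq_sub_sinh_sq (t/2)]
  simp only [smul_eq_mul, habs, hlog]
  have ha0 : a ≠ 0 := ne_of_gt hmem.1
  have : (-t)^m = (-1:ℝ)^m * t^m := by rw [neg_pow]
  rw [this]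
  have h2a : (1 - a^2) * Real.sinh t = 2 * a := by
    field_simp at hkey
    linarith
  field_simp
  linear_combination (AFn k a) * h2a

theorem stmt8 (k : List ℕ) (hk : k ≠ []) (hkpos : ∀ a ∈ k, 0 < a) (m : ℕ) :
    psiKT (m + 1) k =
      ((-1) ^ m / (Nat.factorial m : ℂ)) *
        ((∫ x in (0:ℝ)..1, Real.log ((1 - x) / (1 + x)) ^ m * AFn k x / x : ℝ) : ℂ) := by
  unfold psiKT
  rw [Complex.Gamma_nat_eq_factorial m]
  have hs : ((m:ℂ) + 1 - 1) = (m:ℂ) := by ring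
  simp only [hs, Complex.cpow_natCast]
  have hint : (∫ t in Set.Ioi (0:ℝ), (t:ℂ)^m * ((AFn k (Real.tanh (t/2)) / Real.sinh t : ℝ) : ℂ))
      = ((∫ t in Set.Ioi (0:ℝ), t^m * (AFn k (Real.tanh (t/2)) / Real.sinh t) : ℝ) : ℂ) := by
    simp only [← Complex.ofReal_pow, ← Complex.ofReal_mul]
    exact integral_ofReal
  rw [hint, intervalIntegral.integral_of_le zero_le_one,
    MeasureTheory.integral_Ioc_eq_integral_Ioo, key k m]
  push_cast
  have hneg : ((-1:ℂ))^(m*2) = 1 := by rw [mul_comm, pow_mul]; norm_num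
  set J : ℂ := ((∫ t in Set.Ioi (0:ℝ),
    t^m * (AFn k (Real.tanh (t/2)) / Real.sinh t) : ℝ) : ℂ) with hJ
  linear_combination (-J / (Nat.factorial m : ℂ)) * hneg
end

section
/- Let q be a positive integer and let p,m≥2 be integers. Then Σ_{i+j=m−1, i,j≥0} C(p+i−1,i)C(q+j−1,j)·ζ(p+i,q+j) − (−1)^q·Σ_{i+j=p−1, i,j≥0} C(m+i−1,i)C(q+j−1,j)·ζ(m+i,q+j) = Σ_{i+j=q−1, i,j≥0} (−1)^j·C(m+i−1,i)C(p+j−1,j)·ζ(m+i)·ζ(p+j). -/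
open scoped BigOperators
open MeasureTheory

open Finset

/-- `A(r;p,q)(x,y) = Σ_{i+j=r} C(p+i-1,i) C(q+j-1,j) / (x^{p+i} y^{q+j})`. -/
noncomputable def Acal (r p q : ℕ) (x y : ℝ) : ℝ :=
  ∑ ij ∈ Finset.HasAntidiagonal.antidiagonal r,
    (Nat.choose (p + ij.1 - 1) ij.1 * Nat.choose (q + ij.2 - 1) ij.2 : ℝ) /
      (x ^ (p + ij.1) * y ^ (q + ij.2))

noncomputable def Scal1 (r p q : ℕ) (x d : ℝ) : ℝ :=
  ∑ j ∈ Finset.range p,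
    (Nat.choose (q + j - 1) j * Nat.choose (r + p - 1 - j) r : ℝ) /
      (x ^ (r + p - j) * d ^ (q + j))

noncomputable def Scal2 (r p q : ℕ) (y d : ℝ) : ℝ :=
  ∑ j ∈ Finset.range q,
    (-1 : ℝ) ^ j * ((Nat.choose (p + j - 1) j * Nat.choose (r + q - 1 - j) r : ℝ) /
      (y ^ (r + q - j) * d ^ (p + j)))

noncomputable def Gcal (r p q : ℕ) (x y d : ℝ) : ℝ :=
  (-1 : ℝ) ^ q * Scal1 r p q x d + Scal2 r p q y d

lemma Acal_zero (p q : ℕ) (x y : ℝ) : Acal 0 p q x y = 1 / (x ^ p * y ^ q) := by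
  simp [Acal]

lemma Acal_q0 (r p : ℕ) (x y : ℝ) :
    Acal r p 0 x y = (Nat.choose (p + r - 1) r : ℝ) / x ^ (p + r) := by
  rw [Acal, Finset.sum_eq_single (r, 0)]
  · simp
  · rintro ⟨i, j⟩ hb hne
    rw [Finset.HasAntidiagonal.mem_antidiagonal] at hb
    have hj : 0 < j := by
      rcases Nat.eq_zero_or_pos j with h | h
      · exact absurd (by simp [h, ← hb]) hne
      · exact h
    have : Nat.choose (j - 1) j = 0 := Nat.choose_eq_zero_of_lt (by omega)
    simp [this]
  · intro h
    exact absurd (Finset.HasAntidiagonal.mem_antidiagonal.2 (by simp)) h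

lemma Acal_p0 (r q : ℕ) (x y : ℝ) :
    Acal r 0 q x y = (Nat.choose (q + r - 1) r : ℝ) / y ^ (q + r) := by
  rw [Acal, Finset.sum_eq_single (0, r)]
  · simp
  · rintro ⟨i, j⟩ hb hne
    rw [Finset.HasAntidiagonal.mem_antidiagonal] at hb
    have hi : 0 < i := by
      rcases Nat.eq_zero_or_pos i with h | h
      · exact absurd (by simp [h, ← hb]) hne
      · exact h
    have : Nat.choose (i - 1) i = 0 := Nat.choose_eq_zero_of_lt (by omega)
    simp [this]
  · intro h
    exact absurd (Finset.HasAntidiagonal.mem_antidiagonal.2 (by simp)) h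

lemma Gcal_q0 (r p : ℕ) (hp : 0 < p) (x y d : ℝ) :
    Gcal r p 0 x y d = (Nat.choose (p + r - 1) r : ℝ) / x ^ (p + r) := by
  have hS2 : Scal2 r p 0 y d = 0 := by simp [Scal2]
  rw [Gcal, hS2, add_zero, Scal1, pow_zero, one_mul]
  rw [Finset.sum_eq_single 0]
  · have h1 : r + p - 1 - 0 = p + r - 1 := by omega
    have h2 : r + p - 0 = p + r := by omega
    simp [h1, h2]
  · intro j _ hj
    have : Nat.choose (j - 1) j = 0 := Nat.choose_eq_zero_of_lt (by omega)
    simp [this]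
  · intro h
    exact absurd (Finset.mem_range.2 hp) h

lemma Gcal_p0 (r q : ℕ) (hq : 0 < q) (x y d : ℝ) :
    Gcal r 0 q x y d = (Nat.choose (q + r - 1) r : ℝ) / y ^ (q + r) := by
  have hS1 : Scal1 r 0 q x d = 0 := by simp [Scal1]
  rw [Gcal, hS1, mul_zero, zero_add, Scal2]
  rw [Finset.sum_eq_single 0]
  · have h1 : r + q - 1 - 0 = q + r - 1 := by omega
    have h2 : r + q - 0 = q + r := by omega
    simp [h1, h2]
  · intro j _ hj
    have : Nat.choose (j - 1) j = 0 := Nat.choose_eq_zero_of_lt (by omega)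
    simp [this]
  · intro h
    exact absurd (Finset.mem_range.2 hq) h

lemma R1b (R P q : ℕ) (x y : ℝ) (hx : x ≠ 0) :
    x * Acal (R + 1) (P + 1) q x y = Acal (R + 1) P q x y + Acal R (P + 1) q x y := by
  rw [Acal, Finset.mul_sum]
  have step1 : ∀ ij ∈ Finset.HasAntidiagonal.antidiagonal (R + 1),
      x * ((Nat.choose (P + 1 + ij.1 - 1) ij.1 * Nat.choose (q + ij.2 - 1) ij.2 : ℝ) /
        (x ^ (P + 1 + ij.1) * y ^ (q + ij.2)))
      = (Nat.choose (P + ij.1) ij.1 * Nat.choose (q + ij.2 - 1) ij.2 : ℝ) /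
        (x ^ (P + ij.1) * y ^ (q + ij.2)) := by
    rintro ⟨i, j⟩ _
    have h1 : P + 1 + i - 1 = P + i := by omega
    have h2 : P + 1 + i = (P + i) + 1 := by omega
    rw [h1, h2, pow_succ]
    have h3 : x ^ (P + i) * x * y ^ (q + j) = x * (x ^ (P + i) * y ^ (q + j)) := by ring
    rw [h3, ← mul_div_assoc, mul_div_mul_left _ _ hx]
  rw [Finset.sum_congr rfl step1]
  rw [Finset.Nat.sum_antidiagonal_succ
    (f := fun ij => (Nat.choose (P + ij.1) ij.1 * Nat.choose (q + ij.2 - 1) ij.2 : ℝ) /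
      (x ^ (P + ij.1) * y ^ (q + ij.2)))]
  conv_rhs =>
    rw [Acal, Finset.Nat.sum_antidiagonal_succ
      (f := fun ij => (Nat.choose (P + ij.1 - 1) ij.1 * Nat.choose (q + ij.2 - 1) ij.2 : ℝ) /
        (x ^ (P + ij.1) * y ^ (q + ij.2))), Acal]
  have key : ∀ ij ∈ Finset.HasAntidiagonal.antidiagonal R,
      (Nat.choose (P + (ij.1 + 1)) (ij.1 + 1) * Nat.choose (q + ij.2 - 1) ij.2 : ℝ) /
        (x ^ (P + (ij.1 + 1)) * y ^ (q + ij.2))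
      = (Nat.choose (P + (ij.1 + 1) - 1) (ij.1 + 1) * Nat.choose (q + ij.2 - 1) ij.2 : ℝ) /
          (x ^ (P + (ij.1 + 1)) * y ^ (q + ij.2))
        + (Nat.choose (P + 1 + ij.1 - 1) ij.1 * Nat.choose (q + ij.2 - 1) ij.2 : ℝ) /
          (x ^ (P + 1 + ij.1) * y ^ (q + ij.2)) := by
    rintro ⟨i, j⟩ _
    have h1 : P + (i + 1) - 1 = P + i := by omega
    have h2 : P + 1 + i - 1 = P + i := by omega
    have h3 : P + 1 + i = P + (i + 1) := by omega
    have h4 : P + (i + 1) = P + i + 1 := by omega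
    rw [h1, h2, h3]
    have hpas : Nat.choose (P + i + 1) (i + 1)
        = Nat.choose (P + i) i + Nat.choose (P + i) (i + 1) := Nat.choose_succ_succ' (P + i) i
    rw [h4, hpas]
    push_cast
    ring
  rw [Finset.sum_congr rfl key, Finset.sum_add_distrib]
  simp only [Nat.choose_zero_right, Nat.add_sub_cancel]
  ring

lemma R2b (R p Q : ℕ) (x y : ℝ) (hy : y ≠ 0) :
    y * Acal (R + 1) p (Q + 1) x y = Acal (R + 1) p Q x y + Acal R p (Q + 1) x y := by
  rw [Acal, Finset.mul_sum]
  have step1 : ∀ ij ∈ Finset.HasAntidiagonal.antidiagonal (R + 1),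
      y * ((Nat.choose (p + ij.1 - 1) ij.1 * Nat.choose (Q + 1 + ij.2 - 1) ij.2 : ℝ) /
        (x ^ (p + ij.1) * y ^ (Q + 1 + ij.2)))
      = (Nat.choose (p + ij.1 - 1) ij.1 * Nat.choose (Q + ij.2) ij.2 : ℝ) /
        (x ^ (p + ij.1) * y ^ (Q + ij.2)) := by
    rintro ⟨i, j⟩ _
    have h1 : Q + 1 + j - 1 = Q + j := by omega
    have h2 : Q + 1 + j = (Q + j) + 1 := by omega
    rw [h1, h2, pow_succ]
    have h3 : x ^ (p + i) * (y ^ (Q + j) * y) = y * (x ^ (p + i) * y ^ (Q + j)) := by ring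
    rw [h3, ← mul_div_assoc, mul_div_mul_left _ _ hy]
  rw [Finset.sum_congr rfl step1]
  rw [Finset.Nat.sum_antidiagonal_succ'
    (f := fun ij => (Nat.choose (p + ij.1 - 1) ij.1 * Nat.choose (Q + ij.2) ij.2 : ℝ) /
      (x ^ (p + ij.1) * y ^ (Q + ij.2)))]
  conv_rhs =>
    rw [Acal, Finset.Nat.sum_antidiagonal_succ'
      (f := fun ij => (Nat.choose (p + ij.1 - 1) ij.1 * Nat.choose (Q + ij.2 - 1) ij.2 : ℝ) /
        (x ^ (p + ij.1) * y ^ (Q + ij.2))), Acal]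
  have key : ∀ ij ∈ Finset.HasAntidiagonal.antidiagonal R,
      (Nat.choose (p + ij.1 - 1) ij.1 * Nat.choose (Q + (ij.2 + 1)) (ij.2 + 1) : ℝ) /
        (x ^ (p + ij.1) * y ^ (Q + (ij.2 + 1)))
      = (Nat.choose (p + ij.1 - 1) ij.1 * Nat.choose (Q + (ij.2 + 1) - 1) (ij.2 + 1) : ℝ) /
          (x ^ (p + ij.1) * y ^ (Q + (ij.2 + 1)))
        + (Nat.choose (p + ij.1 - 1) ij.1 * Nat.choose (Q + 1 + ij.2 - 1) ij.2 : ℝ) /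
          (x ^ (p + ij.1) * y ^ (Q + 1 + ij.2)) := by
    rintro ⟨i, j⟩ _
    have h1 : Q + (j + 1) - 1 = Q + j := by omega
    have h2 : Q + 1 + j - 1 = Q + j := by omega
    have h3 : Q + 1 + j = Q + (j + 1) := by omega
    have h4 : Q + (j + 1) = Q + j + 1 := by omega
    rw [h1, h2, h3]
    have hpas : Nat.choose (Q + j + 1) (j + 1)
        = Nat.choose (Q + j) j + Nat.choose (Q + j) (j + 1) := Nat.choose_succ_succ' (Q + j) j
    rw [h4, hpas]
    push_cast
    ring
  rw [Finset.sum_congr rfl key, Finset.sum_add_distrib]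
  simp only [Nat.choose_zero_right, Nat.add_sub_cancel]
  ring

lemma recA (r P Q : ℕ) (x y : ℝ) (hx : x ≠ 0) (hy : y ≠ 0) :
    (x - y) * Acal r (P + 1) (Q + 1) x y
      = Acal r P (Q + 1) x y - Acal r (P + 1) Q x y := by
  cases r with
  | zero =>
      rw [Acal_zero, Acal_zero, Acal_zero]
      rw [pow_succ, pow_succ]
      field_simp
  | succ R =>
      rw [sub_mul, R1b R P (Q + 1) x y hx, R2b R (P + 1) Q x y hy]
      ring

lemma recS1 (r P Q : ℕ) (x d : ℝ) (hd : d ≠ 0) :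
    d * Scal1 r (P + 1) (Q + 1) x d
      = Scal1 r P (Q + 1) x d + Scal1 r (P + 1) Q x d := by
  rw [Scal1, Finset.mul_sum]
  have step1 : ∀ j ∈ Finset.range (P + 1),
      d * ((Nat.choose (Q + 1 + j - 1) j * Nat.choose (r + (P + 1) - 1 - j) r : ℝ) /
        (x ^ (r + (P + 1) - j) * d ^ (Q + 1 + j)))
      = (Nat.choose (Q + j) j * Nat.choose (r + P - j) r : ℝ) /
        (x ^ (r + P + 1 - j) * d ^ (Q + j)) := by
    intro j _
    have h1 : Q + 1 + j - 1 = Q + j := by omega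
    have h2 : r + (P + 1) - 1 - j = r + P - j := by omega
    have h3 : r + (P + 1) - j = r + P + 1 - j := by omega
    have h4 : Q + 1 + j = (Q + j) + 1 := by omega
    rw [h1, h2, h3, h4, pow_succ]
    have h5 : x ^ (r + P + 1 - j) * (d ^ (Q + j) * d)
        = d * (x ^ (r + P + 1 - j) * d ^ (Q + j)) := by ring
    rw [h5, ← mul_div_assoc, mul_div_mul_left _ _ hd]
  rw [Finset.sum_congr rfl step1]
  rw [Finset.sum_range_succ'
    (f := fun j => (Nat.choose (Q + j) j * Nat.choose (r + P - j) r : ℝ) /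
      (x ^ (r + P + 1 - j) * d ^ (Q + j)))]
  conv_rhs =>
    rw [Scal1, Scal1, Finset.sum_range_succ'
      (f := fun j => (Nat.choose (Q + j - 1) j * Nat.choose (r + (P + 1) - 1 - j) r : ℝ) /
        (x ^ (r + (P + 1) - j) * d ^ (Q + j)))]
  have key : ∀ j ∈ Finset.range P,
      (Nat.choose (Q + (j + 1)) (j + 1) * Nat.choose (r + P - (j + 1)) r : ℝ) /
        (x ^ (r + P + 1 - (j + 1)) * d ^ (Q + (j + 1)))
      = (Nat.choose (Q + 1 + j - 1) j * Nat.choose (r + P - 1 - j) r : ℝ) /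
          (x ^ (r + P - j) * d ^ (Q + 1 + j))
        + (Nat.choose (Q + (j + 1) - 1) (j + 1) * Nat.choose (r + (P + 1) - 1 - (j + 1)) r : ℝ) /
          (x ^ (r + (P + 1) - (j + 1)) * d ^ (Q + (j + 1))) := by
    intro j _
    have h1 : Q + 1 + j - 1 = Q + j := by omega
    have h2 : r + P - (j + 1) = r + P - 1 - j := by omega
    have h3 : r + P + 1 - (j + 1) = r + P - j := by omega
    have h4 : Q + (j + 1) - 1 = Q + j := by omega
    have h5 : r + (P + 1) - 1 - (j + 1) = r + P - 1 - j := by omega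
    have h6 : r + (P + 1) - (j + 1) = r + P - j := by omega
    have h7 : Q + (j + 1) = Q + j + 1 := by omega
    rw [h1, h2, h3, h4, h5, h6, h7]
    have hpas : Nat.choose (Q + j + 1) (j + 1)
        = Nat.choose (Q + j) j + Nat.choose (Q + j) (j + 1) := Nat.choose_succ_succ' (Q + j) j
    rw [hpas, pow_succ]
    push_cast
    ring
  rw [Finset.sum_congr rfl key, Finset.sum_add_distrib]
  simp only [Nat.choose_zero_right, Nat.add_sub_cancel, Nat.add_zero, Nat.sub_zero]
  norm_num
  ring

lemma recS2 (r P Q : ℕ) (y d : ℝ) (hd : d ≠ 0) :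
    d * Scal2 r (P + 1) (Q + 1) y d
      = Scal2 r P (Q + 1) y d - Scal2 r (P + 1) Q y d := by
  rw [Scal2, Finset.mul_sum]
  have step1 : ∀ j ∈ Finset.range (Q + 1),
      d * ((-1 : ℝ) ^ j * ((Nat.choose (P + 1 + j - 1) j * Nat.choose (r + (Q + 1) - 1 - j) r : ℝ) /
        (y ^ (r + (Q + 1) - j) * d ^ (P + 1 + j))))
      = (-1 : ℝ) ^ j * ((Nat.choose (P + j) j * Nat.choose (r + Q - j) r : ℝ) /
        (y ^ (r + Q + 1 - j) * d ^ (P + j))) := by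
    intro j _
    have h1 : P + 1 + j - 1 = P + j := by omega
    have h2 : r + (Q + 1) - 1 - j = r + Q - j := by omega
    have h3 : r + (Q + 1) - j = r + Q + 1 - j := by omega
    have h4 : P + 1 + j = (P + j) + 1 := by omega
    rw [h1, h2, h3, h4, pow_succ]
    have h5 : y ^ (r + Q + 1 - j) * (d ^ (P + j) * d)
        = d * (y ^ (r + Q + 1 - j) * d ^ (P + j)) := by ring
    rw [h5]
    rw [show ∀ a b c : ℝ, a * ((-1:ℝ)^j * (b / c)) = (-1:ℝ)^j * (a * (b / c)) from
      fun a b c => by ring]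
    rw [← mul_div_assoc, mul_div_mul_left _ _ hd]
  rw [Finset.sum_congr rfl step1]
  rw [Finset.sum_range_succ'
    (f := fun j => (-1 : ℝ) ^ j * ((Nat.choose (P + j) j * Nat.choose (r + Q - j) r : ℝ) /
      (y ^ (r + Q + 1 - j) * d ^ (P + j))))]
  conv_rhs =>
    rw [Scal2, Scal2, Finset.sum_range_succ'
      (f := fun j => (-1 : ℝ) ^ j * ((Nat.choose (P + j - 1) j * Nat.choose (r + (Q + 1) - 1 - j) r : ℝ) /
        (y ^ (r + (Q + 1) - j) * d ^ (P + j))))]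
  have key : ∀ j ∈ Finset.range Q,
      (-1 : ℝ) ^ (j + 1) * ((Nat.choose (P + (j + 1)) (j + 1) * Nat.choose (r + Q - (j + 1)) r : ℝ) /
        (y ^ (r + Q + 1 - (j + 1)) * d ^ (P + (j + 1))))
      = (-1 : ℝ) ^ (j + 1) * ((Nat.choose (P + (j + 1) - 1) (j + 1) * Nat.choose (r + (Q + 1) - 1 - (j + 1)) r : ℝ) /
          (y ^ (r + (Q + 1) - (j + 1)) * d ^ (P + (j + 1))))
        - (-1 : ℝ) ^ j * ((Nat.choose (P + 1 + j - 1) j * Nat.choose (r + Q - 1 - j) r : ℝ) /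
          (y ^ (r + Q - j) * d ^ (P + 1 + j))) := by
    intro j _
    have h1 : P + (j + 1) - 1 = P + j := by omega
    have h2 : r + Q - (j + 1) = r + Q - 1 - j := by omega
    have h3 : r + Q + 1 - (j + 1) = r + Q - j := by omega
    have h4 : r + (Q + 1) - 1 - (j + 1) = r + Q - 1 - j := by omega
    have h5 : r + (Q + 1) - (j + 1) = r + Q - j := by omega
    have h6 : P + 1 + j - 1 = P + j := by omega
    have h7 : P + (j + 1) = P + j + 1 := by omega
    have h8 : P + 1 + j = P + j + 1 := by omega
    rw [h1, h2, h3, h4, h5, h6, h7, h8]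
    have hpas : Nat.choose (P + j + 1) (j + 1)
        = Nat.choose (P + j) j + Nat.choose (P + j) (j + 1) := Nat.choose_succ_succ' (P + j) j
    rw [hpas, pow_succ, pow_succ]
    push_cast
    ring
  rw [Finset.sum_congr rfl key, Finset.sum_sub_distrib]
  have e1 : r + (Q + 1) - 1 - 0 = r + Q - 0 := by omega
  have e2 : r + (Q + 1) - 0 = r + Q + 1 - 0 := by omega
  rw [e1, e2]
  simp only [Nat.choose_zero_right, Nat.add_sub_cancel, Nat.add_zero, Nat.sub_zero]
  norm_num
  ring

lemma recG (r P Q : ℕ) (x y d : ℝ) (hd : d ≠ 0) :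
    d * Gcal r (P + 1) (Q + 1) x y d
      = Gcal r P (Q + 1) x y d - Gcal r (P + 1) Q x y d := by
  rw [Gcal, Gcal, Gcal, mul_add]
  rw [show d * ((-1:ℝ) ^ (Q + 1) * Scal1 r (P + 1) (Q + 1) x d)
      = (-1:ℝ) ^ (Q + 1) * (d * Scal1 r (P + 1) (Q + 1) x d) from by ring]
  rw [recS1 r P Q x d hd, recS2 r P Q y d hd, pow_succ]
  ring


lemma KEY (x y : ℝ) (hx : x ≠ 0) (hy : y ≠ 0) (hxy : x - y ≠ 0) :
    ∀ s p q r, p + q ≤ s → (0 < p ∨ 0 < q) →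
      Acal r p q x y = Gcal r p q x y (x - y) := by
  intro s
  induction s with
  | zero =>
      intro p q r hs hpos
      omega
  | succ s ih =>
      intro p q r hs hpos
      match p, q with
      | 0, 0 => omega
      | P + 1, 0 =>
          rw [Acal_q0, Gcal_q0 _ _ (Nat.succ_pos P)]
      | 0, Q + 1 =>
          rw [Acal_p0, Gcal_p0 _ _ (Nat.succ_pos Q)]
      | P + 1, Q + 1 =>
          have h1 := recA r P Q x y hx hy
          have h2 := recG r P Q x y (x - y) hxy
          have i1 : Acal r P (Q + 1) x y = Gcal r P (Q + 1) x y (x - y) :=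
            ih P (Q + 1) r (by omega) (by omega)
          have i2 : Acal r (P + 1) Q x y = Gcal r (P + 1) Q x y (x - y) :=
            ih (P + 1) Q r (by omega) (by omega)
          apply mul_left_cancel₀ hxy
          rw [h1, i1, i2, h2]

abbrev SubT := {p : ℕ × ℕ // p.2 < p.1 ∧ 0 < p.2}
abbrev PosT := {n : ℕ // 0 < n}

lemma summable1 (a : ℕ) (ha : 2 ≤ a) :
    Summable (fun n : PosT => 1 / (n.1 : ℝ) ^ a) := by
  have h : Summable (fun n : ℕ => 1 / (n : ℝ) ^ a) :=
    Real.summable_one_div_nat_pow.mpr (by omega)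
  exact h.subtype _

set_option maxHeartbeats 1000000 in
lemma summable2 (a b : ℕ) (ha : 2 ≤ a) (hb : 1 ≤ b) :
    Summable (fun x : SubT => 1 / ((x.1.1 : ℝ) ^ a * (x.1.2 : ℝ) ^ b)) := by
  have hg : Summable (fun n : ℕ => 1 / (n : ℝ) ^ ((3 : ℝ) / 2)) :=
    Real.summable_one_div_nat_rpow.mpr (by norm_num)
  have hF : Summable (fun z : ℕ × ℕ =>
      (1 / (z.1 : ℝ) ^ ((3 : ℝ) / 2)) * (1 / (z.2 : ℝ) ^ ((3 : ℝ) / 2))) :=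
    hg.mul_of_nonneg hg (fun n => by positivity) (fun n => by positivity)
  have hFs := hF.subtype {p : ℕ × ℕ | p.2 < p.1 ∧ 0 < p.2}
  refine Summable.of_nonneg_of_le (fun x => by positivity) ?_ hFs
  rintro ⟨⟨n, k⟩, hnk, hk⟩
  have hk1 : (1 : ℝ) ≤ (k : ℝ) := by exact_mod_cast hk
  have hn1 : (1 : ℝ) ≤ (n : ℝ) := by
    have : 0 < n := lt_trans hk hnk
    exact_mod_cast this
  have hkn : (k : ℝ) ≤ (n : ℝ) := by exact_mod_cast hnk.le
  have hk0 : (0 : ℝ) < (k : ℝ) := by linarith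
  have hn0 : (0 : ℝ) < (n : ℝ) := by linarith
  show 1 / ((n : ℝ) ^ a * (k : ℝ) ^ b)
      ≤ 1 / (n : ℝ) ^ ((3 : ℝ) / 2) * (1 / (k : ℝ) ^ ((3 : ℝ) / 2))
  rw [div_mul_div_comm, one_mul]
  apply one_div_le_one_div_of_le (by positivity)
  have e32 : ((3 : ℝ) / 2) = 1 + 1 / 2 := by norm_num
  have hrn : (n : ℝ) ^ ((3 : ℝ) / 2) = (n : ℝ) * (n : ℝ) ^ ((1 : ℝ) / 2) := by
    rw [e32, Real.rpow_add hn0, Real.rpow_one]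
  have hrk : (k : ℝ) ^ ((3 : ℝ) / 2) = (k : ℝ) * (k : ℝ) ^ ((1 : ℝ) / 2) := by
    rw [e32, Real.rpow_add hk0, Real.rpow_one]
  have hhalf : (k : ℝ) ^ ((1 : ℝ) / 2) ≤ (n : ℝ) ^ ((1 : ℝ) / 2) :=
    Real.rpow_le_rpow hk0.le hkn (by norm_num)
  have hsq : (n : ℝ) ^ ((1 : ℝ) / 2) * (n : ℝ) ^ ((1 : ℝ) / 2) = (n : ℝ) := by
    rw [← Real.rpow_add hn0]; norm_num
  have step1 : (n : ℝ) ^ ((3 : ℝ) / 2) * (k : ℝ) ^ ((3 : ℝ) / 2)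
      ≤ (n : ℝ) ^ 2 * (k : ℝ) := by
    rw [hrn, hrk]
    calc (n : ℝ) * (n : ℝ) ^ ((1:ℝ)/2) * ((k : ℝ) * (k : ℝ) ^ ((1:ℝ)/2))
        ≤ (n : ℝ) * (n : ℝ) ^ ((1:ℝ)/2) * ((k : ℝ) * (n : ℝ) ^ ((1:ℝ)/2)) := by
          apply mul_le_mul_of_nonneg_left _ (by positivity)
          exact mul_le_mul_of_nonneg_left hhalf (by positivity)
      _ = (n : ℝ) ^ ((1:ℝ)/2) * (n : ℝ) ^ ((1:ℝ)/2) * (n : ℝ) * (k : ℝ) := by ring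
      _ = (n : ℝ) ^ 2 * (k : ℝ) := by rw [hsq]; ring
  refine le_trans step1 ?_
  have h1 : (n : ℝ) ^ 2 ≤ (n : ℝ) ^ a := pow_le_pow_right₀ hn1 ha
  have h3 : (k : ℝ) ≤ (k : ℝ) ^ b := by
    calc (k : ℝ) = (k : ℝ) ^ 1 := (pow_one _).symm
      _ ≤ (k : ℝ) ^ b := pow_le_pow_right₀ hk1 hb
  calc (n : ℝ) ^ 2 * (k : ℝ) ≤ (n : ℝ) ^ a * (k : ℝ) := by
        exact mul_le_mul_of_nonneg_right h1 hk0.le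
    _ ≤ (n : ℝ) ^ a * (k : ℝ) ^ b := by
        exact mul_le_mul_of_nonneg_left h3 (by positivity)

def eD : SubT ≃ SubT where
  toFun x := ⟨(x.1.1, x.1.1 - x.1.2), by
    obtain ⟨⟨n, k⟩, h1, h2⟩ := x
    exact ⟨Nat.sub_lt (lt_trans h2 h1) h2, Nat.sub_pos_of_lt h1⟩⟩
  invFun x := ⟨(x.1.1, x.1.1 - x.1.2), by
    obtain ⟨⟨n, k⟩, h1, h2⟩ := x
    exact ⟨Nat.sub_lt (lt_trans h2 h1) h2, Nat.sub_pos_of_lt h1⟩⟩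
  left_inv := by
    rintro ⟨⟨n, k⟩, h1, h2⟩
    apply Subtype.ext
    simp only
    exact Prod.ext rfl (Nat.sub_sub_self h1.le)
  right_inv := by
    rintro ⟨⟨n, k⟩, h1, h2⟩
    apply Subtype.ext
    simp only
    exact Prod.ext rfl (Nat.sub_sub_self h1.le)

def e2 : SubT ≃ PosT × PosT where
  toFun x := (⟨x.1.2, x.2.2⟩, ⟨x.1.1 - x.1.2, Nat.sub_pos_of_lt x.2.1⟩)
  invFun z := ⟨(z.1.1 + z.2.1, z.1.1), ⟨Nat.lt_add_of_pos_right z.2.2, z.1.2⟩⟩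
  left_inv := by
    rintro ⟨⟨n, k⟩, h1, h2⟩
    apply Subtype.ext
    exact Prod.ext (Nat.add_sub_cancel' h1.le) rfl
  right_inv := by
    rintro ⟨⟨a, ha⟩, ⟨b, hb⟩⟩
    refine Prod.ext (Subtype.ext rfl) (Subtype.ext ?_)
    simp



set_option maxHeartbeats 800000 in
lemma tsum_eD (a b : ℕ) :
    ∑' x : SubT, (1 : ℝ) / ((x.1.1 : ℝ) ^ a * ((x.1.1 - x.1.2 : ℕ) : ℝ) ^ b)
      = ∑' x : SubT, (1 : ℝ) / ((x.1.1 : ℝ) ^ a * (x.1.2 : ℝ) ^ b) := by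
  have h := eD.tsum_eq (f := fun x : SubT => (1 : ℝ) / ((x.1.1 : ℝ) ^ a * (x.1.2 : ℝ) ^ b))
  rw [← h]
  exact tsum_congr (fun x => by simp only [eD, Equiv.coe_fn_mk])

lemma summable_eD (a b : ℕ) (ha : 2 ≤ a) (hb : 1 ≤ b) :
    Summable (fun x : SubT =>
      (1 : ℝ) / ((x.1.1 : ℝ) ^ a * ((x.1.1 - x.1.2 : ℕ) : ℝ) ^ b)) := by
  have h := (eD.summable_iff
    (f := fun x : SubT => (1 : ℝ) / ((x.1.1 : ℝ) ^ a * (x.1.2 : ℝ) ^ b))).mpr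
      (summable2 a b ha hb)
  exact h

set_option maxHeartbeats 2000000 in
lemma summable_e2 (A B : ℕ) (hA : 2 ≤ A) (hB : 2 ≤ B) :
    Summable (fun x : SubT =>
      (1 : ℝ) / ((x.1.2 : ℝ) ^ A * ((x.1.1 - x.1.2 : ℕ) : ℝ) ^ B)) := by
  have hf : Summable (fun z : PosT × PosT => (1 / (z.1.1 : ℝ) ^ A) * (1 / (z.2.1 : ℝ) ^ B)) :=
    (summable1 A hA).mul_of_nonneg (summable1 B hB)
      (fun n => by positivity) (fun n => by positivity)
  have h := (e2.summable_iff
    (f := fun z : PosT × PosT => (1 / (z.1.1 : ℝ) ^ A) * (1 / (z.2.1 : ℝ) ^ B))).mpr hf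
  refine h.congr (fun x => ?_)
  simp only [Function.comp_apply, e2, Equiv.coe_fn_mk]
  rw [div_mul_div_comm, one_mul]

set_option maxHeartbeats 2000000 in
lemma tsum_e2 (A B : ℕ) (hA : 2 ≤ A) (hB : 2 ≤ B) :
    ∑' x : SubT, (1 : ℝ) / ((x.1.2 : ℝ) ^ A * ((x.1.1 - x.1.2 : ℕ) : ℝ) ^ B)
      = (∑' n : PosT, 1 / (n.1 : ℝ) ^ A) * (∑' n : PosT, 1 / (n.1 : ℝ) ^ B) := by
  have h := e2.tsum_eq (f := fun z : PosT × PosT => (1 / (z.1.1 : ℝ) ^ A) * (1 / (z.2.1 : ℝ) ^ B))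
  have hc : ∀ x : SubT,
      (1 / ((e2 x).1.1 : ℝ) ^ A) * (1 / ((e2 x).2.1 : ℝ) ^ B)
        = (1 : ℝ) / ((x.1.2 : ℝ) ^ A * ((x.1.1 - x.1.2 : ℕ) : ℝ) ^ B) := fun x => by
    simp only [e2, Equiv.coe_fn_mk]
    rw [div_mul_div_comm, one_mul]
  calc ∑' x : SubT, (1 : ℝ) / ((x.1.2 : ℝ) ^ A * ((x.1.1 - x.1.2 : ℕ) : ℝ) ^ B)
      = ∑' x : SubT, (1 / ((e2 x).1.1 : ℝ) ^ A) * (1 / ((e2 x).2.1 : ℝ) ^ B) :=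
        tsum_congr (fun x => (hc x).symm)
    _ = ∑' z : PosT × PosT, (1 / (z.1.1 : ℝ) ^ A) * (1 / (z.2.1 : ℝ) ^ B) := h
    _ = (∑' n : PosT, 1 / (n.1 : ℝ) ^ A) * (∑' n : PosT, 1 / (n.1 : ℝ) ^ B) := by
        exact (tsum_mul_tsum_of_summable_norm
          (f := fun n : PosT => 1 / (n.1 : ℝ) ^ A) (g := fun n : PosT => 1 / (n.1 : ℝ) ^ B)
          (summable_norm_iff.mpr (summable1 A hA))
          (summable_norm_iff.mpr (summable1 B hB))).symm

lemma zsummable (c : ℝ) (a b : ℕ) (ha : 2 ≤ a) (hb : 1 ≤ b) :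
    Summable (fun x : SubT => c / ((x.1.1 : ℝ) ^ a * (x.1.2 : ℝ) ^ b)) :=
  ((summable2 a b ha hb).mul_left c).congr (fun x => mul_one_div _ _)

lemma zterm (c : ℝ) (a b : ℕ) (ha : 2 ≤ a) (hb : 1 ≤ b) :
    ∑' x : SubT, c / ((x.1.1 : ℝ) ^ a * (x.1.2 : ℝ) ^ b) = c * zeta2 a b := by
  rw [zeta2, ← tsum_mul_left]
  exact tsum_congr (fun x => (mul_one_div _ _).symm)

lemma zsummableD (c : ℝ) (a b : ℕ) (ha : 2 ≤ a) (hb : 1 ≤ b) :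
    Summable (fun x : SubT =>
      c / ((x.1.1 : ℝ) ^ a * ((x.1.1 - x.1.2 : ℕ) : ℝ) ^ b)) :=
  ((summable_eD a b ha hb).mul_left c).congr (fun x => mul_one_div _ _)

lemma ztermD (c : ℝ) (a b : ℕ) (ha : 2 ≤ a) (hb : 1 ≤ b) :
    ∑' x : SubT, c / ((x.1.1 : ℝ) ^ a * ((x.1.1 - x.1.2 : ℕ) : ℝ) ^ b) = c * zeta2 a b := by
  calc ∑' x : SubT, c / ((x.1.1 : ℝ) ^ a * ((x.1.1 - x.1.2 : ℕ) : ℝ) ^ b)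
      = ∑' x : SubT, c * (1 / ((x.1.1 : ℝ) ^ a * ((x.1.1 - x.1.2 : ℕ) : ℝ) ^ b)) :=
        tsum_congr (fun x => (mul_one_div _ _).symm)
    _ = c * ∑' x : SubT, 1 / ((x.1.1 : ℝ) ^ a * ((x.1.1 - x.1.2 : ℕ) : ℝ) ^ b) := tsum_mul_left
    _ = c * zeta2 a b := by rw [tsum_eD a b, zeta2]

lemma zsummableP (c : ℝ) (A B : ℕ) (hA : 2 ≤ A) (hB : 2 ≤ B) :
    Summable (fun x : SubT =>
      c / ((x.1.2 : ℝ) ^ A * ((x.1.1 - x.1.2 : ℕ) : ℝ) ^ B)) :=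
  ((summable_e2 A B hA hB).mul_left c).congr (fun x => mul_one_div _ _)

lemma ztermP (c : ℝ) (A B : ℕ) (hA : 2 ≤ A) (hB : 2 ≤ B) :
    ∑' x : SubT, c / ((x.1.2 : ℝ) ^ A * ((x.1.1 - x.1.2 : ℕ) : ℝ) ^ B)
      = c * (zeta1 A * zeta1 B) := by
  calc ∑' x : SubT, c / ((x.1.2 : ℝ) ^ A * ((x.1.1 - x.1.2 : ℕ) : ℝ) ^ B)
      = ∑' x : SubT, c * (1 / ((x.1.2 : ℝ) ^ A * ((x.1.1 - x.1.2 : ℕ) : ℝ) ^ B)) :=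
        tsum_congr (fun x => (mul_one_div _ _).symm)
    _ = c * ∑' x : SubT, 1 / ((x.1.2 : ℝ) ^ A * ((x.1.1 - x.1.2 : ℕ) : ℝ) ^ B) := tsum_mul_left
    _ = c * (zeta1 A * zeta1 B) := by rw [tsum_e2 A B hA hB, zeta1, zeta1]

set_option maxHeartbeats 2000000 in
theorem stmt15 (q p m : ℕ) (hq : 0 < q) (hp : 2 ≤ p) (hm : 2 ≤ m) :
    (∑ ij ∈ Finset.HasAntidiagonal.antidiagonal (m - 1),
        (Nat.choose (p + ij.1 - 1) ij.1 : ℝ) * (Nat.choose (q + ij.2 - 1) ij.2) *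
          zeta2 (p + ij.1) (q + ij.2)) -
      (-1 : ℝ) ^ q *
        ∑ ij ∈ Finset.HasAntidiagonal.antidiagonal (p - 1),
          (Nat.choose (m + ij.1 - 1) ij.1 : ℝ) * (Nat.choose (q + ij.2 - 1) ij.2) *
            zeta2 (m + ij.1) (q + ij.2) =
      ∑ ij ∈ Finset.HasAntidiagonal.antidiagonal (q - 1),
        (-1 : ℝ) ^ ij.2 * (Nat.choose (m + ij.1 - 1) ij.1) *
          (Nat.choose (p + ij.2 - 1) ij.2) * zeta1 (m + ij.1) * zeta1 (p + ij.2) := by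
  obtain ⟨r, rfl⟩ : ∃ r, m = r + 1 := ⟨m - 1, by omega⟩
  obtain ⟨s, rfl⟩ : ∃ s, p = s + 1 := ⟨p - 1, by omega⟩
  have hr : 1 ≤ r := by omega
  have hs : 1 ≤ s := by omega
  have had : r + 1 - 1 = r := by omega
  have had2 : s + 1 - 1 = s := by omega
  rw [had, had2]
  -- Step 1: first sum as a tsum of Acal
  have hL1 : (∑ ij ∈ Finset.HasAntidiagonal.antidiagonal r,
      (Nat.choose (s + 1 + ij.1 - 1) ij.1 : ℝ) * (Nat.choose (q + ij.2 - 1) ij.2) *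
        zeta2 (s + 1 + ij.1) (q + ij.2))
      = ∑' x : SubT, Acal r (s + 1) q (x.1.1 : ℝ) (x.1.2 : ℝ) := by
    have hA : ∀ x : SubT, Acal r (s + 1) q (x.1.1 : ℝ) (x.1.2 : ℝ)
        = ∑ ij ∈ Finset.HasAntidiagonal.antidiagonal r,
          (Nat.choose (s + 1 + ij.1 - 1) ij.1 * Nat.choose (q + ij.2 - 1) ij.2 : ℝ) /
            ((x.1.1 : ℝ) ^ (s + 1 + ij.1) * (x.1.2 : ℝ) ^ (q + ij.2)) := fun x => rfl
    rw [tsum_congr hA, Summable.tsum_finsetSum (fun ij _ => zsummable _ _ _ (by omega) (by omega))]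
    apply Finset.sum_congr rfl
    intro ij _
    rw [zterm _ _ _ (by omega) (by omega)]
  -- Step 2: pointwise identity
  have hpoint : ∀ x : SubT, Acal r (s + 1) q (x.1.1 : ℝ) (x.1.2 : ℝ)
      = Gcal r (s + 1) q (x.1.1 : ℝ) (x.1.2 : ℝ) ((x.1.1 - x.1.2 : ℕ) : ℝ) := by
    rintro ⟨⟨n, k⟩, h1, h2⟩
    have hn : 0 < n := lt_trans h2 h1
    have hx : (n : ℝ) ≠ 0 := Nat.cast_ne_zero.mpr hn.ne'
    have hy : (k : ℝ) ≠ 0 := Nat.cast_ne_zero.mpr h2.ne'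
    have hxy : (n : ℝ) - (k : ℝ) ≠ 0 := by
      have : (k : ℝ) < (n : ℝ) := by exact_mod_cast h1
      linarith
    have hcast : ((n - k : ℕ) : ℝ) = (n : ℝ) - (k : ℝ) := Nat.cast_sub h1.le
    show Acal r (s + 1) q (n : ℝ) (k : ℝ)
        = Gcal r (s + 1) q (n : ℝ) (k : ℝ) ((n - k : ℕ) : ℝ)
    rw [hcast]
    exact KEY (n : ℝ) (k : ℝ) hx hy hxy (s + 1 + q) (s + 1) q r le_rfl (Or.inl (by omega))
  -- Step 3: tsum of Gcal
  have hS1sum : Summable (fun x : SubT =>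
      Scal1 r (s + 1) q (x.1.1 : ℝ) ((x.1.1 - x.1.2 : ℕ) : ℝ)) := by
    apply summable_sum
    intro j hj
    rw [Finset.mem_range] at hj
    exact zsummableD _ _ _ (by omega) (by omega)
  have hS2sum : Summable (fun x : SubT =>
      Scal2 r (s + 1) q (x.1.2 : ℝ) ((x.1.1 - x.1.2 : ℕ) : ℝ)) := by
    apply summable_sum
    intro j hj
    rw [Finset.mem_range] at hj
    exact (zsummableP _ _ _ (by omega) (by omega)).mul_left _
  have hG : ∑' x : SubT, Gcal r (s + 1) q (x.1.1 : ℝ) (x.1.2 : ℝ) ((x.1.1 - x.1.2 : ℕ) : ℝ)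
      = (-1 : ℝ) ^ q * (∑ j ∈ Finset.range (s + 1),
            (Nat.choose (q + j - 1) j * Nat.choose (r + (s + 1) - 1 - j) r : ℝ) *
              zeta2 (r + (s + 1) - j) (q + j))
        + ∑ j ∈ Finset.range q,
            (-1 : ℝ) ^ j * ((Nat.choose (s + 1 + j - 1) j * Nat.choose (r + q - 1 - j) r : ℝ) *
              (zeta1 (r + q - j) * zeta1 (s + 1 + j))) := by
    have hGx : ∀ x : SubT, Gcal r (s + 1) q (x.1.1 : ℝ) (x.1.2 : ℝ) ((x.1.1 - x.1.2 : ℕ) : ℝ)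
        = (-1 : ℝ) ^ q * Scal1 r (s + 1) q (x.1.1 : ℝ) ((x.1.1 - x.1.2 : ℕ) : ℝ)
          + Scal2 r (s + 1) q (x.1.2 : ℝ) ((x.1.1 - x.1.2 : ℕ) : ℝ) := fun x => rfl
    rw [tsum_congr hGx, Summable.tsum_add (hS1sum.mul_left _) hS2sum, tsum_mul_left]
    congr 1
    · congr 1
      have hSx : ∀ x : SubT, Scal1 r (s + 1) q (x.1.1 : ℝ) ((x.1.1 - x.1.2 : ℕ) : ℝ)
          = ∑ j ∈ Finset.range (s + 1),
            (Nat.choose (q + j - 1) j * Nat.choose (r + (s + 1) - 1 - j) r : ℝ) /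
              ((x.1.1 : ℝ) ^ (r + (s + 1) - j) * ((x.1.1 - x.1.2 : ℕ) : ℝ) ^ (q + j)) :=
        fun x => rfl
      rw [tsum_congr hSx, Summable.tsum_finsetSum (fun j hj => by
        rw [Finset.mem_range] at hj
        exact zsummableD _ _ _ (by omega) (by omega))]
      apply Finset.sum_congr rfl
      intro j hj
      rw [Finset.mem_range] at hj
      exact ztermD _ _ _ (by omega) (by omega)
    · have hSx : ∀ x : SubT, Scal2 r (s + 1) q (x.1.2 : ℝ) ((x.1.1 - x.1.2 : ℕ) : ℝ)
          = ∑ j ∈ Finset.range q,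
            (-1 : ℝ) ^ j * ((Nat.choose (s + 1 + j - 1) j * Nat.choose (r + q - 1 - j) r : ℝ) /
              ((x.1.2 : ℝ) ^ (r + q - j) * ((x.1.1 - x.1.2 : ℕ) : ℝ) ^ (s + 1 + j))) :=
        fun x => rfl
      rw [tsum_congr hSx, Summable.tsum_finsetSum (fun j hj => by
        rw [Finset.mem_range] at hj
        exact (zsummableP _ _ _ (by omega) (by omega)).mul_left _)]
      apply Finset.sum_congr rfl
      intro j hj
      rw [Finset.mem_range] at hj
      rw [tsum_mul_left, ztermP _ _ _ (by omega) (by omega)]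
  -- Step 4: reindex the finite sums
  have hre1 : ∑ j ∈ Finset.range (s + 1),
      (Nat.choose (q + j - 1) j * Nat.choose (r + (s + 1) - 1 - j) r : ℝ) *
        zeta2 (r + (s + 1) - j) (q + j)
      = ∑ ij ∈ Finset.HasAntidiagonal.antidiagonal s,
        (Nat.choose (r + 1 + ij.1 - 1) ij.1 : ℝ) * (Nat.choose (q + ij.2 - 1) ij.2) *
          zeta2 (r + 1 + ij.1) (q + ij.2) := by
    rw [Finset.Nat.sum_antidiagonal_eq_sum_range_succ_mk]
    rw [← Finset.sum_range_reflect]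
    apply Finset.sum_congr rfl
    intro j hj
    rw [Finset.mem_range] at hj
    simp only
    have h3 : r + (s + 1) - 1 - (s + 1 - 1 - j) = r + j := by omega
    have h4 : r + (s + 1) - (s + 1 - 1 - j) = r + 1 + j := by omega
    have h5 : s + 1 - 1 - j = s - j := by omega
    have h6 : r + 1 + j - 1 = r + j := by omega
    rw [h3, h4, h5, h6]
    have hcs : Nat.choose (r + j) (r + j - j) = Nat.choose (r + j) j :=
      Nat.choose_symm (by omega)
    rw [show r + j - j = r from by omega] at hcs
    rw [hcs]
    ring
  have hre2 : ∑ j ∈ Finset.range q,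
      (-1 : ℝ) ^ j * ((Nat.choose (s + 1 + j - 1) j * Nat.choose (r + q - 1 - j) r : ℝ) *
        (zeta1 (r + q - j) * zeta1 (s + 1 + j)))
      = ∑ ij ∈ Finset.HasAntidiagonal.antidiagonal (q - 1),
        (-1 : ℝ) ^ ij.2 * (Nat.choose (r + 1 + ij.1 - 1) ij.1) *
          (Nat.choose (s + 1 + ij.2 - 1) ij.2) * zeta1 (r + 1 + ij.1) * zeta1 (s + 1 + ij.2) := by
    rw [Finset.Nat.sum_antidiagonal_eq_sum_range_succ_mk]
    rw [show (q - 1).succ = q from by omega]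
    rw [← Finset.sum_range_reflect]
    apply Finset.sum_congr rfl
    intro j hj
    rw [Finset.mem_range] at hj
    simp only
    have h3 : r + q - 1 - (q - 1 - j) = r + j := by omega
    have h4 : r + q - (q - 1 - j) = r + 1 + j := by omega
    have h6 : r + 1 + j - 1 = r + j := by omega
    rw [h3, h4, h6]
    have hcs : Nat.choose (r + j) (r + j - j) = Nat.choose (r + j) j :=
      Nat.choose_symm (by omega)
    rw [show r + j - j = r from by omega] at hcs
    rw [hcs]
    ring
  rw [hL1, tsum_congr hpoint, hG, ← hre1, ← hre2]
  ring
end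

section
/- Let q be a positive integer and let p,m≥2 be integers. Then Σ_{i+j=m−1, i,j≥0} C(p+i−1,i)C(q+j−1,j)·T(p+i,q+j) − (−1)^q·Σ_{i+j=p−1, i,j≥0} C(m+i−1,i)C(q+j−1,j)·T(m+i,q+j) = Σ_{i+j=q−1, i,j≥0} (−1)^j·C(m+i−1,i)C(p+j−1,j)·T(m+i)·T(p+j). -/
open scoped BigOperators
open MeasureTheory

noncomputable def S1f (x y : ℝ) (a b c : ℕ) : ℝ :=
  ∑ ij ∈ Finset.HasAntidiagonal.antidiagonal a,
    (Nat.choose (b + ij.1) ij.1 : ℝ) * (Nat.choose (c + ij.2) ij.2) /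
      ((x + y) ^ (b + 1 + ij.1) * y ^ (c + 1 + ij.2))

noncomputable def Rf (x y : ℝ) (a b c : ℕ) : ℝ :=
  ∑ ij ∈ Finset.HasAntidiagonal.antidiagonal c,
    (-1 : ℝ) ^ ij.2 * (Nat.choose (a + ij.1) ij.1) * (Nat.choose (b + ij.2) ij.2) /
      (y ^ (a + 1 + ij.1) * x ^ (b + 1 + ij.2))

lemma S1zero (x y : ℝ) (b c : ℕ) : S1f x y 0 b c = 1 / ((x + y) ^ (b + 1) * y ^ (c + 1)) := by
  simp [S1f]

lemma Rzero (x y : ℝ) (a b : ℕ) : Rf x y a b 0 = 1 / (y ^ (a + 1) * x ^ (b + 1)) := by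
  simp [Rf]

lemma recY (x y : ℝ) (hy : y ≠ 0) (hu : x + y ≠ 0) (a b c : ℕ) :
    y * S1f x y (a + 1) b (c + 1) = S1f x y (a + 1) b c + S1f x y a b (c + 1) := by
  have h : y * S1f x y (a + 1) b (c + 1) - S1f x y (a + 1) b c = S1f x y a b (c + 1) := by
    rw [S1f, S1f, S1f, Finset.mul_sum, ← Finset.sum_sub_distrib,
      Finset.Nat.sum_antidiagonal_succ']
    have h0 : y * ((Nat.choose (b + (a + 1)) (a + 1) : ℝ) * (Nat.choose (c + 1 + 0) 0) /
          ((x + y) ^ (b + 1 + (a + 1)) * y ^ (c + 1 + 1 + 0))) -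
        (Nat.choose (b + (a + 1)) (a + 1) : ℝ) * (Nat.choose (c + 0) 0) /
          ((x + y) ^ (b + 1 + (a + 1)) * y ^ (c + 1 + 0)) = 0 := by
      have hU : ((x + y) : ℝ) ^ (b + 1 + (a + 1)) ≠ 0 := pow_ne_zero _ hu
      simp only [Nat.choose_zero_right, Nat.cast_one, mul_one]
      field_simp
      ring
    rw [h0, zero_add]
    apply Finset.sum_congr rfl
    rintro ⟨i, j⟩ -
    simp only
    rw [show c + (j + 1) = c + 1 + j from by omega,
      show c + 1 + (j + 1) = (c + 1 + j) + 1 from by omega,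
      show c + 1 + 1 + (j + 1) = (c + 1 + 1 + j) + 1 from by omega,
      Nat.choose_succ_succ' (c + 1 + j) j]
    have hU : ((x + y) : ℝ) ^ (b + 1 + i) ≠ 0 := pow_ne_zero _ hu
    push_cast
    field_simp
    ring
  linarith [h]

lemma recU (x y : ℝ) (hy : y ≠ 0) (hu : x + y ≠ 0) (a b c : ℕ) :
    (x + y) * S1f x y (a + 1) (b + 1) c = S1f x y (a + 1) b c + S1f x y a (b + 1) c := by
  have h : (x + y) * S1f x y (a + 1) (b + 1) c - S1f x y (a + 1) b c
      = S1f x y a (b + 1) c := by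
    rw [S1f, S1f, S1f, Finset.mul_sum, ← Finset.sum_sub_distrib,
      Finset.Nat.sum_antidiagonal_succ]
    have h0 : (x + y) * ((Nat.choose (b + 1 + 0) 0 : ℝ) * (Nat.choose (c + (a + 1)) (a + 1)) /
          ((x + y) ^ (b + 1 + 1 + 0) * y ^ (c + 1 + (a + 1)))) -
        (Nat.choose (b + 0) 0 : ℝ) * (Nat.choose (c + (a + 1)) (a + 1)) /
          ((x + y) ^ (b + 1 + 0) * y ^ (c + 1 + (a + 1))) = 0 := by
      simp only [Nat.choose_zero_right, Nat.cast_one, one_mul]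
      field_simp
      ring
    rw [h0, zero_add]
    apply Finset.sum_congr rfl
    rintro ⟨i, j⟩ -
    simp only
    rw [show b + (i + 1) = b + 1 + i from by omega,
      show b + 1 + (i + 1) = (b + 1 + i) + 1 from by omega,
      show b + 1 + 1 + (i + 1) = (b + 1 + 1 + i) + 1 from by omega,
      Nat.choose_succ_succ' (b + 1 + i) i]
    have hU : ((x + y) : ℝ) ^ (b + 1 + 1 + i) ≠ 0 := pow_ne_zero _ hu
    push_cast
    field_simp
    ring
  linarith [h]

lemma recRY (x y : ℝ) (hx : x ≠ 0) (hy : y ≠ 0) (a b c : ℕ) :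
    y * Rf x y (a + 1) b (c + 1) = Rf x y a b (c + 1) + Rf x y (a + 1) b c := by
  have h : y * Rf x y (a + 1) b (c + 1) - Rf x y a b (c + 1) = Rf x y (a + 1) b c := by
    rw [Rf, Rf, Rf, Finset.mul_sum, ← Finset.sum_sub_distrib,
      Finset.Nat.sum_antidiagonal_succ]
    have h0 : y * ((-1 : ℝ) ^ (c + 1) * (Nat.choose (a + 1 + 0) 0) * (Nat.choose (b + (c + 1)) (c + 1)) /
          (y ^ (a + 1 + 1 + 0) * x ^ (b + 1 + (c + 1)))) -
        (-1 : ℝ) ^ (c + 1) * (Nat.choose (a + 0) 0) * (Nat.choose (b + (c + 1)) (c + 1)) /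
          (y ^ (a + 1 + 0) * x ^ (b + 1 + (c + 1))) = 0 := by
      simp only [Nat.choose_zero_right, Nat.cast_one, mul_one]
      field_simp
      ring
    rw [h0, zero_add]
    apply Finset.sum_congr rfl
    rintro ⟨i, j⟩ -
    simp only
    rw [show a + (i + 1) = a + 1 + i from by omega,
      show a + 1 + (i + 1) = (a + 1 + i) + 1 from by omega,
      show a + 1 + 1 + (i + 1) = (a + 1 + 1 + i) + 1 from by omega,
      Nat.choose_succ_succ' (a + 1 + i) i]
    have hY : (y : ℝ) ^ (a + 1 + 1 + i) ≠ 0 := pow_ne_zero _ hy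
    push_cast
    field_simp
    ring
  linarith [h]

lemma recRX (x y : ℝ) (hx : x ≠ 0) (hy : y ≠ 0) (a b c : ℕ) :
    x * Rf x y a (b + 1) (c + 1) = Rf x y a b (c + 1) - Rf x y a (b + 1) c := by
  have h : x * Rf x y a (b + 1) (c + 1) - Rf x y a b (c + 1) = - Rf x y a (b + 1) c := by
    rw [Rf, Rf, Rf, Finset.mul_sum, ← Finset.sum_sub_distrib, ← Finset.sum_neg_distrib,
      Finset.Nat.sum_antidiagonal_succ']
    have h0 : x * ((-1 : ℝ) ^ 0 * (Nat.choose (a + (c + 1)) (c + 1)) * (Nat.choose (b + 1 + 0) 0) /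
          (y ^ (a + 1 + (c + 1)) * x ^ (b + 1 + 1 + 0))) -
        (-1 : ℝ) ^ 0 * (Nat.choose (a + (c + 1)) (c + 1)) * (Nat.choose (b + 0) 0) /
          (y ^ (a + 1 + (c + 1)) * x ^ (b + 1 + 0)) = 0 := by
      simp only [Nat.choose_zero_right, Nat.cast_one, mul_one, pow_zero, one_mul]
      field_simp
      ring
    rw [h0, zero_add]
    apply Finset.sum_congr rfl
    rintro ⟨i, j⟩ -
    simp only
    rw [show b + (j + 1) = b + 1 + j from by omega,
      show b + 1 + (j + 1) = (b + 1 + j) + 1 from by omega,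
      show b + 1 + 1 + (j + 1) = (b + 1 + 1 + j) + 1 from by omega,
      Nat.choose_succ_succ' (b + 1 + j) j]
    have hX : (x : ℝ) ^ (b + 1 + 1 + j) ≠ 0 := pow_ne_zero _ hx
    push_cast
    field_simp
    ring
  linarith [h]

lemma recX (x y : ℝ) (hx : x ≠ 0) (hy : y ≠ 0) (hu : x + y ≠ 0) (a b c : ℕ) :
    x * S1f x y a (b + 1) (c + 1) = S1f x y a b (c + 1) - S1f x y a (b + 1) c := by
  cases a with
  | zero =>
    rw [S1zero, S1zero, S1zero]
    field_simp
    ring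
  | succ a =>
    have h1 := recU x y hy hu a b (c + 1)
    have h2 := recY x y hy hu a (b + 1) c
    have hxy : x = (x + y) - y := by ring
    calc x * S1f x y (a + 1) (b + 1) (c + 1)
        = (x + y) * S1f x y (a + 1) (b + 1) (c + 1) - y * S1f x y (a + 1) (b + 1) (c + 1) := by
          ring
      _ = S1f x y (a + 1) b (c + 1) - S1f x y (a + 1) (b + 1) c := by
          rw [h1, h2]; ring

lemma Rswap (x y : ℝ) (a b c : ℕ) : Rf y x b a c = (-1 : ℝ) ^ c * Rf x y a b c := by
  rw [Rf, Rf, Finset.mul_sum]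
  conv_lhs => rw [← Finset.HasAntidiagonal.map_swap_antidiagonal, Finset.sum_map]
  apply Finset.sum_congr rfl
  rintro ⟨i, j⟩ hij
  rw [Finset.HasAntidiagonal.mem_antidiagonal] at hij
  simp only [Function.Embedding.coeFn_mk, Prod.swap_prod_mk]
  have h : (-1 : ℝ) ^ i * (-1) ^ j = (-1) ^ c := by rw [← pow_add, hij]
  have h3 : (-1 : ℝ) ^ (j * 2) = 1 := by rw [mul_comm, pow_mul]; norm_num
  rw [← h]
  linear_combination (-((-1 : ℝ) ^ i * ((Nat.choose (a + i) i : ℝ) * (Nat.choose (b + j) j) /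
      (y ^ (a + 1 + i) * x ^ (b + 1 + j))))) * h3

lemma A00 (x y : ℝ) (hx : x ≠ 0) (hy : y ≠ 0) (hu : x + y ≠ 0) (a : ℕ) :
    S1f x y a 0 0 + S1f y x 0 a 0 = Rf x y a 0 0 := by
  have hu' : y + x ≠ 0 := by rwa [add_comm]
  induction a with
  | zero =>
    rw [S1zero, S1zero, Rzero]
    field_simp
    ring
  | succ a ih =>
    have step : S1f x y (a + 1) 0 0 = 1 / ((x + y) ^ (a + 2) * y) + y⁻¹ * S1f x y a 0 0 := by
      rw [S1f, S1f, Finset.Nat.sum_antidiagonal_succ', Finset.mul_sum]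
      congr 1
      · rw [show 0 + 1 + (a + 1) = a + 2 from by omega]
        simp [Nat.choose_self]
      · apply Finset.sum_congr rfl
        rintro ⟨i, j⟩ -
        simp only [zero_add, Nat.choose_self, Nat.choose_zero_right, Nat.cast_one, one_mul,
          mul_one, Nat.cast_one]
        rw [show 0 + 1 + (j + 1) = j + 2 from by omega, show 0 + 1 + j = j + 1 from by omega]
        have hU : ((x + y) : ℝ) ^ (0 + 1 + i) ≠ 0 := pow_ne_zero _ hu
        field_simp
        ring
    have ihS : S1f x y a 0 0 = 1 / (y ^ (a + 1) * x ^ (0 + 1)) - 1 / ((y + x) ^ (a + 1) * x ^ (0 + 1)) := by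
      rw [S1zero, Rzero] at ih
      linarith
    rw [step, S1zero, Rzero, ihS]
    field_simp
    ring

lemma C00 (x y : ℝ) (hx : x ≠ 0) (hy : y ≠ 0) (hu : x + y ≠ 0) (c : ℕ) :
    S1f x y 0 0 c + (-1 : ℝ) ^ c * S1f y x 0 0 c = Rf x y 0 0 c := by
  have hu' : y + x ≠ 0 := by rwa [add_comm]
  induction c with
  | zero =>
    rw [S1zero, S1zero, Rzero]
    field_simp
    ring
  | succ c ih =>
    have Rstep : Rf x y 0 0 (c + 1) =
        (-1 : ℝ) ^ (c + 1) / (y * x ^ (c + 2)) + y⁻¹ * Rf x y 0 0 c := by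
      rw [Rf, Rf, Finset.Nat.sum_antidiagonal_succ, Finset.mul_sum]
      congr 1
      · rw [show 0 + 1 + (c + 1) = c + 2 from by omega]
        simp [Nat.choose_self]
      · apply Finset.sum_congr rfl
        rintro ⟨i, j⟩ -
        simp only [zero_add, Nat.choose_self, Nat.choose_zero_right, Nat.cast_one, one_mul,
          mul_one]
        rw [show 0 + 1 + (i + 1) = i + 2 from by omega, show 0 + 1 + i = i + 1 from by omega]
        have hX : (x : ℝ) ^ (0 + 1 + j) ≠ 0 := pow_ne_zero _ hx
        field_simp
        ring
    rw [S1zero, S1zero] at ih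
    rw [S1zero, S1zero, Rstep, ← ih]
    field_simp
    ring

lemma keyB0aux (x y : ℝ) (hx : x ≠ 0) (hy : y ≠ 0) (hu : x + y ≠ 0) :
    ∀ n a b, a + b ≤ n → S1f x y a b 0 + S1f y x b a 0 = Rf x y a b 0 := by
  have hu' : y + x ≠ 0 := by rwa [add_comm]
  intro n
  induction n with
  | zero =>
    intro a b h
    obtain rfl : a = 0 := by omega
    obtain rfl : b = 0 := by omega
    exact A00 x y hx hy hu 0
  | succ n ih =>
    intro a b h
    match a, b with
    | a, 0 => exact A00 x y hx hy hu a
    | 0, b + 1 =>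
      have h1 := A00 y x hy hx hu' (b + 1)
      have h2 := Rswap x y 0 (b + 1) 0
      rw [pow_zero, one_mul] at h2
      linarith
    | a + 1, b + 1 =>
      have h1 := recU x y hy hu a b 0
      have h2 := recU y x hx hu' b a 0
      have h3 : (x + y) * Rf x y (a + 1) (b + 1) 0 =
          Rf x y (a + 1) b 0 + Rf x y a (b + 1) 0 := by
        rw [Rzero, Rzero, Rzero]
        field_simp
        ring
      have IH1 := ih (a + 1) b (by omega)
      have IH2 := ih a (b + 1) (by omega)
      have hgoal : (x + y) * (S1f x y (a + 1) (b + 1) 0 + S1f y x (b + 1) (a + 1) 0)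
          = (x + y) * Rf x y (a + 1) (b + 1) 0 := by
        linear_combination h1 + h2 - h3 + IH1 + IH2
      exact mul_left_cancel₀ hu hgoal

lemma key0Caux (x y : ℝ) (hx : x ≠ 0) (hy : y ≠ 0) (hu : x + y ≠ 0) :
    ∀ n b c, b + c ≤ n →
      S1f x y 0 b c + (-1 : ℝ) ^ c * S1f y x b 0 c = Rf x y 0 b c := by
  have hu' : y + x ≠ 0 := by rwa [add_comm]
  intro n
  induction n with
  | zero =>
    intro b c h
    obtain rfl : b = 0 := by omega
    obtain rfl : c = 0 := by omega
    exact C00 x y hx hy hu 0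
  | succ n ih =>
    intro b c h
    match b, c with
    | b, 0 =>
      have := keyB0aux x y hx hy hu (0 + b) 0 b le_rfl
      rw [pow_zero, one_mul]
      exact this
    | 0, c + 1 => exact C00 x y hx hy hu (c + 1)
    | b + 1, c + 1 =>
      have h1 : x * S1f x y 0 (b + 1) (c + 1) =
          S1f x y 0 b (c + 1) - S1f x y 0 (b + 1) c := by
        rw [S1zero, S1zero, S1zero]
        field_simp
        ring
      have h2 := recY y x hx hu' b 0 c
      have h3 := recRX x y hx hy 0 b c
      have IH1 := ih b (c + 1) (by omega)
      have IH2 := ih (b + 1) c (by omega)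
      have hgoal : x * (S1f x y 0 (b + 1) (c + 1) +
          (-1 : ℝ) ^ (c + 1) * S1f y x (b + 1) 0 (c + 1))
          = x * Rf x y 0 (b + 1) (c + 1) := by
        linear_combination h1 + (-1 : ℝ) ^ (c + 1) * h2 - h3 + IH1 - IH2
      exact mul_left_cancel₀ hx hgoal

lemma keyMain (x y : ℝ) (hx : x ≠ 0) (hy : y ≠ 0) (hu : x + y ≠ 0) (a b c : ℕ) :
    S1f x y a b c + (-1 : ℝ) ^ c * S1f y x b a c = Rf x y a b c := by
  have hu' : y + x ≠ 0 := by rwa [add_comm]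
  suffices H : ∀ n a b c, a + c ≤ n →
      S1f x y a b c + (-1 : ℝ) ^ c * S1f y x b a c = Rf x y a b c from
    H (a + c) a b c le_rfl
  intro n
  induction n with
  | zero =>
    intro a b c h
    obtain rfl : a = 0 := by omega
    obtain rfl : c = 0 := by omega
    exact key0Caux x y hx hy hu b b 0 (by omega)
  | succ n ih =>
    intro a b c h
    match a, c with
    | 0, c => exact key0Caux x y hx hy hu (b + c) b c le_rfl
    | a + 1, 0 =>
      have := keyB0aux x y hx hy hu (a + 1 + b) (a + 1) b le_rfl
      rw [pow_zero, one_mul]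
      exact this
    | a + 1, c + 1 =>
      have h1 := recY x y hy hu a b c
      have h2 := recX y x hy hx hu' b a c
      have h3 := recRY x y hx hy a b c
      have IH1 := ih a b (c + 1) (by omega)
      have IH2 := ih (a + 1) b c (by omega)
      have hgoal : y * (S1f x y (a + 1) b (c + 1) +
          (-1 : ℝ) ^ (c + 1) * S1f y x b (a + 1) (c + 1))
          = y * Rf x y (a + 1) b (c + 1) := by
        linear_combination h1 + (-1 : ℝ) ^ (c + 1) * h2 - h3 + IH1 + IH2
      exact mul_left_cancel₀ hy hgoal

abbrev OddT := {n : ℕ // 0 < n ∧ n % 2 = 1}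

lemma OddT.one_le (n : OddT) : (1 : ℝ) ≤ ((n : ℕ) : ℝ) := by
  exact_mod_cast n.2.1

noncomputable def gO (n : OddT) : ℝ := 1 / ((n : ℕ) : ℝ) ^ (3/2 : ℝ)

lemma gO_nonneg (n : OddT) : 0 ≤ gO n := by
  unfold gO
  positivity

lemma summable_gO : Summable gO := by
  have h : Summable (fun n : ℕ => 1 / (n : ℝ) ^ (3/2 : ℝ)) :=
    Real.summable_one_div_nat_rpow.mpr (by norm_num)
  exact h.comp_injective Subtype.val_injective

lemma summable_gO_prod :
    Summable (fun q : OddT × OddT => gO q.1 * gO q.2) :=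
  summable_gO.mul_of_nonneg summable_gO gO_nonneg gO_nonneg

lemma bound_aux {A B : ℕ} (hA : 2 ≤ A) (hB : 1 ≤ B) {x y : ℝ}
    (hx : 1 ≤ x) (hy : 1 ≤ y) :
    1 / ((x + y) ^ A * y ^ B) ≤ (1 / x ^ (3/2 : ℝ)) * (1 / y ^ (3/2 : ℝ)) := by
  have hx0 : (0 : ℝ) < x := lt_of_lt_of_le one_pos hx
  have hy0 : (0 : ℝ) < y := lt_of_lt_of_le one_pos hy
  have hu0 : (0 : ℝ) < x + y := by linarith
  have hu1 : (1 : ℝ) ≤ x + y := by linarith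
  rw [div_mul_div_comm, one_mul]
  apply one_div_le_one_div_of_le
  · positivity
  · -- x^(3/2) * y^(3/2) ≤ (x+y)^A * y^B
    have key : x ^ (3/2 : ℝ) * y ^ (3/2 : ℝ) ≤ (x + y) ^ 2 * y := by
      have e1 : x ^ (3/2 : ℝ) = x * x ^ (1/2 : ℝ) := by
        nth_rewrite 2 [← Real.rpow_one x]
        rw [← Real.rpow_add hx0]
        norm_num
      have e2 : y ^ (3/2 : ℝ) = y * y ^ (1/2 : ℝ) := by
        nth_rewrite 2 [← Real.rpow_one y]
        rw [← Real.rpow_add hy0]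
        norm_num
      have h12x : x ^ (1/2 : ℝ) ≤ (x + y) ^ (1/2 : ℝ) :=
        Real.rpow_le_rpow (le_of_lt hx0) (by linarith) (by norm_num)
      have h12y : y ^ (1/2 : ℝ) ≤ (x + y) ^ (1/2 : ℝ) :=
        Real.rpow_le_rpow (le_of_lt hy0) (by linarith) (by norm_num)
      calc x ^ (3/2 : ℝ) * y ^ (3/2 : ℝ)
          = (x * y) * (x ^ (1/2 : ℝ) * y ^ (1/2 : ℝ)) := by rw [e1, e2]; ring
        _ ≤ (x * y) * ((x + y) ^ (1/2 : ℝ) * (x + y) ^ (1/2 : ℝ)) := by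
            apply mul_le_mul_of_nonneg_left _ (by positivity)
            apply mul_le_mul h12x h12y (by positivity) (by positivity)
        _ = (x * y) * (x + y) := by rw [← Real.rpow_add hu0]; norm_num
        _ ≤ (x + y) ^ 2 * y := by nlinarith [mul_pos hy0 (mul_pos hy0 hu0)]
    have mono : (x + y) ^ 2 * y ≤ (x + y) ^ A * y ^ B := by
      apply mul_le_mul
      · exact pow_le_pow_right₀ hu1 hA
      · calc y = y ^ 1 := (pow_one y).symm
          _ ≤ y ^ B := pow_le_pow_right₀ hy hB
      · linarith
      · positivity
    linarith

lemma summable_T2term {A B : ℕ} (hA : 2 ≤ A) (hB : 1 ≤ B) :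
    Summable (fun q : OddT × OddT =>
      1 / ((((q.1 : ℕ) : ℝ) + ((q.2 : ℕ) : ℝ)) ^ A * ((q.2 : ℕ) : ℝ) ^ B)) := by
  refine Summable.of_nonneg_of_le (fun q => by positivity) (fun q => ?_) summable_gO_prod
  exact bound_aux hA hB q.1.one_le q.2.one_le

lemma summable_T2term' {A B : ℕ} (hA : 2 ≤ A) (hB : 1 ≤ B) :
    Summable (fun q : OddT × OddT =>
      1 / ((((q.2 : ℕ) : ℝ) + ((q.1 : ℕ) : ℝ)) ^ A * ((q.1 : ℕ) : ℝ) ^ B)) := by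
  refine Summable.of_nonneg_of_le (fun q => by positivity) (fun q => ?_) summable_gO_prod
  calc 1 / ((((q.2 : ℕ) : ℝ) + ((q.1 : ℕ) : ℝ)) ^ A * ((q.1 : ℕ) : ℝ) ^ B)
      ≤ (1 / ((q.2 : ℕ) : ℝ) ^ (3/2 : ℝ)) * (1 / ((q.1 : ℕ) : ℝ) ^ (3/2 : ℝ)) :=
        bound_aux hA hB q.2.one_le q.1.one_le
    _ = gO q.1 * gO q.2 := by rw [gO, gO]; ring

lemma summable_T1term {A : ℕ} (hA : 2 ≤ A) :
    Summable (fun n : OddT => 1 / ((n : ℕ) : ℝ) ^ A) := by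
  refine Summable.of_nonneg_of_le (fun n => by positivity) (fun n => ?_) summable_gO
  rw [gO]
  apply one_div_le_one_div_of_le
  · exact Real.rpow_pos_of_pos (lt_of_lt_of_le one_pos n.one_le) _
  · calc ((n : ℕ) : ℝ) ^ (3/2 : ℝ) ≤ ((n : ℕ) : ℝ) ^ ((2 : ℕ) : ℝ) :=
          Real.rpow_le_rpow_of_exponent_le n.one_le (by norm_num)
      _ = ((n : ℕ) : ℝ) ^ (2 : ℕ) := Real.rpow_natCast _ 2
      _ ≤ ((n : ℕ) : ℝ) ^ A := pow_le_pow_right₀ n.one_le hA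

lemma summable_T1prod {A B : ℕ} (hA : 2 ≤ A) (hB : 2 ≤ B) :
    Summable (fun q : OddT × OddT =>
      1 / (((q.1 : ℕ) : ℝ) ^ A * ((q.2 : ℕ) : ℝ) ^ B)) := by
  have h := (summable_T1term hA).mul_of_nonneg (summable_T1term hB)
    (fun n => by positivity) (fun n => by positivity)
  apply h.congr
  intro q
  rw [div_mul_div_comm, one_mul]

def oddPairEquiv : OddT × OddT ≃
    {p : ℕ × ℕ // p.2 < p.1 ∧ 0 < p.2 ∧ p.1 % 2 = 0 ∧ p.2 % 2 = 1} where
  toFun q := ⟨((q.1 : ℕ) + (q.2 : ℕ), (q.2 : ℕ)), by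
    have h1 := q.1.2
    have h2 := q.2.2
    exact ⟨by omega, h2.1, by omega, h2.2⟩⟩
  invFun p := (⟨p.1.1 - p.1.2, by
      have h := p.2
      constructor <;> omega⟩,
    ⟨p.1.2, ⟨p.2.2.1, p.2.2.2.2⟩⟩)
  left_inv q := by
    obtain ⟨⟨x, hx⟩, ⟨y, hy⟩⟩ := q
    exact Prod.ext_iff.mpr ⟨Subtype.ext (by simp), rfl⟩
  right_inv p := by
    obtain ⟨⟨e, o⟩, h1, h2, h3, h4⟩ := p
    exact Subtype.ext (Prod.ext_iff.mpr ⟨by simp; omega, rfl⟩)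

lemma T2_eq (A B : ℕ) : T2 A B = 4 * ∑' q : OddT × OddT,
    1 / ((((q.1 : ℕ) : ℝ) + ((q.2 : ℕ) : ℝ)) ^ A * ((q.2 : ℕ) : ℝ) ^ B) := by
  rw [T2]
  congr 1
  rw [← oddPairEquiv.tsum_eq
    (fun p : {p : ℕ × ℕ // p.2 < p.1 ∧ 0 < p.2 ∧ p.1 % 2 = 0 ∧ p.2 % 2 = 1} =>
      1 / ((p.1.1 : ℝ) ^ A * (p.1.2 : ℝ) ^ B))]
  apply tsum_congr
  intro q
  simp only [oddPairEquiv, Equiv.coe_fn_mk]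
  push_cast
  ring

lemma T1_mul {A B : ℕ} (hA : 2 ≤ A) (hB : 2 ≤ B) :
    T1 A * T1 B = 4 * ∑' q : OddT × OddT,
      1 / (((q.1 : ℕ) : ℝ) ^ A * ((q.2 : ℕ) : ℝ) ^ B) := by
  have hprod := summable_T1prod hA hB
  have hinner : ∀ x : OddT,
      Summable (fun y : OddT => 1 / (((x : ℕ) : ℝ) ^ A * ((y : ℕ) : ℝ) ^ B)) := by
    intro x
    have h := (summable_T1term hB).mul_left (1 / ((x : ℕ) : ℝ) ^ A)
    apply h.congr
    intro y
    rw [div_mul_div_comm, one_mul]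
  have h : (∑' q : OddT × OddT, 1 / (((q.1 : ℕ) : ℝ) ^ A * ((q.2 : ℕ) : ℝ) ^ B))
      = (∑' n : OddT, 1 / ((n : ℕ) : ℝ) ^ A) * (∑' n : OddT, 1 / ((n : ℕ) : ℝ) ^ B) := by
    rw [Summable.tsum_prod' hprod hinner]
    calc ∑' (x : OddT), ∑' (y : OddT), 1 / (((x : ℕ) : ℝ) ^ A * ((y : ℕ) : ℝ) ^ B)
        = ∑' (x : OddT), (1 / ((x : ℕ) : ℝ) ^ A) * ∑' (y : OddT), 1 / ((y : ℕ) : ℝ) ^ B := by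
          apply tsum_congr
          intro x
          rw [← tsum_mul_left]
          apply tsum_congr
          intro y
          rw [div_mul_div_comm, one_mul]
      _ = _ := tsum_mul_right
  rw [T1, T1, h]
  ring

theorem stmt16 (q p m : ℕ) (hq : 0 < q) (hp : 2 ≤ p) (hm : 2 ≤ m) :
    (∑ ij ∈ Finset.HasAntidiagonal.antidiagonal (m - 1),
        (Nat.choose (p + ij.1 - 1) ij.1 : ℝ) * (Nat.choose (q + ij.2 - 1) ij.2) *
          T2 (p + ij.1) (q + ij.2)) -
      (-1 : ℝ) ^ q *
        ∑ ij ∈ Finset.HasAntidiagonal.antidiagonal (p - 1),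
          (Nat.choose (m + ij.1 - 1) ij.1 : ℝ) * (Nat.choose (q + ij.2 - 1) ij.2) *
            T2 (m + ij.1) (q + ij.2) =
      ∑ ij ∈ Finset.HasAntidiagonal.antidiagonal (q - 1),
        (-1 : ℝ) ^ ij.2 * (Nat.choose (m + ij.1 - 1) ij.1) *
          (Nat.choose (p + ij.2 - 1) ij.2) * T1 (m + ij.1) * T1 (p + ij.2) := by
  obtain ⟨a, rfl⟩ : ∃ a, m = a + 2 := ⟨m - 2, by omega⟩
  obtain ⟨b, rfl⟩ : ∃ b, p = b + 2 := ⟨p - 2, by omega⟩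
  obtain ⟨c, rfl⟩ : ∃ c, q = c + 1 := ⟨q - 1, by omega⟩
  -- representation of the first sum
  have repr1 : (∑ ij ∈ Finset.HasAntidiagonal.antidiagonal (a + 2 - 1),
      (Nat.choose (b + 2 + ij.1 - 1) ij.1 : ℝ) * (Nat.choose (c + 1 + ij.2 - 1) ij.2) *
        T2 (b + 2 + ij.1) (c + 1 + ij.2))
      = 4 * ∑' qq : OddT × OddT, S1f ((qq.1 : ℕ) : ℝ) ((qq.2 : ℕ) : ℝ) (a + 1) (b + 1) c := by
    rw [show a + 2 - 1 = a + 1 from by omega]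
    have h1 : ∀ ij ∈ Finset.HasAntidiagonal.antidiagonal (a + 1),
        (Nat.choose (b + 2 + ij.1 - 1) ij.1 : ℝ) * (Nat.choose (c + 1 + ij.2 - 1) ij.2) *
          T2 (b + 2 + ij.1) (c + 1 + ij.2)
        = 4 * ∑' qq : OddT × OddT,
            (Nat.choose (b + 1 + ij.1) ij.1 : ℝ) * (Nat.choose (c + ij.2) ij.2) *
              (1 / ((((qq.1 : ℕ) : ℝ) + ((qq.2 : ℕ) : ℝ)) ^ (b + 2 + ij.1) *
                ((qq.2 : ℕ) : ℝ) ^ (c + 1 + ij.2))) := by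
      intro ij _
      rw [show b + 2 + ij.1 - 1 = b + 1 + ij.1 from by omega,
        show c + 1 + ij.2 - 1 = c + ij.2 from by omega, T2_eq, tsum_mul_left]
      ring
    rw [Finset.sum_congr rfl h1, ← Finset.mul_sum]
    have hsumm : ∀ ij ∈ Finset.HasAntidiagonal.antidiagonal (a + 1),
        Summable (fun qq : OddT × OddT =>
          (Nat.choose (b + 1 + ij.1) ij.1 : ℝ) * (Nat.choose (c + ij.2) ij.2) *
            (1 / ((((qq.1 : ℕ) : ℝ) + ((qq.2 : ℕ) : ℝ)) ^ (b + 2 + ij.1) *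
              ((qq.2 : ℕ) : ℝ) ^ (c + 1 + ij.2)))) := by
      intro ij _
      exact (summable_T2term (by omega) (by omega)).mul_left _
    rw [← Summable.tsum_finsetSum hsumm]
    congr 1
    apply tsum_congr
    intro qq
    rw [S1f]
    apply Finset.sum_congr rfl
    intro ij _
    rw [show b + 1 + 1 + ij.1 = b + 2 + ij.1 from by omega, mul_one_div]
  -- representation of the second sum
  have repr2 : (∑ ij ∈ Finset.HasAntidiagonal.antidiagonal (b + 2 - 1),
      (Nat.choose (a + 2 + ij.1 - 1) ij.1 : ℝ) * (Nat.choose (c + 1 + ij.2 - 1) ij.2) *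
        T2 (a + 2 + ij.1) (c + 1 + ij.2))
      = 4 * ∑' qq : OddT × OddT, S1f ((qq.1 : ℕ) : ℝ) ((qq.2 : ℕ) : ℝ) (b + 1) (a + 1) c := by
    rw [show b + 2 - 1 = b + 1 from by omega]
    have h1 : ∀ ij ∈ Finset.HasAntidiagonal.antidiagonal (b + 1),
        (Nat.choose (a + 2 + ij.1 - 1) ij.1 : ℝ) * (Nat.choose (c + 1 + ij.2 - 1) ij.2) *
          T2 (a + 2 + ij.1) (c + 1 + ij.2)
        = 4 * ∑' qq : OddT × OddT,
            (Nat.choose (a + 1 + ij.1) ij.1 : ℝ) * (Nat.choose (c + ij.2) ij.2) *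
              (1 / ((((qq.1 : ℕ) : ℝ) + ((qq.2 : ℕ) : ℝ)) ^ (a + 2 + ij.1) *
                ((qq.2 : ℕ) : ℝ) ^ (c + 1 + ij.2))) := by
      intro ij _
      rw [show a + 2 + ij.1 - 1 = a + 1 + ij.1 from by omega,
        show c + 1 + ij.2 - 1 = c + ij.2 from by omega, T2_eq, tsum_mul_left]
      ring
    rw [Finset.sum_congr rfl h1, ← Finset.mul_sum]
    have hsumm : ∀ ij ∈ Finset.HasAntidiagonal.antidiagonal (b + 1),
        Summable (fun qq : OddT × OddT =>
          (Nat.choose (a + 1 + ij.1) ij.1 : ℝ) * (Nat.choose (c + ij.2) ij.2) *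
            (1 / ((((qq.1 : ℕ) : ℝ) + ((qq.2 : ℕ) : ℝ)) ^ (a + 2 + ij.1) *
              ((qq.2 : ℕ) : ℝ) ^ (c + 1 + ij.2)))) := by
      intro ij _
      exact (summable_T2term (by omega) (by omega)).mul_left _
    rw [← Summable.tsum_finsetSum hsumm]
    congr 1
    apply tsum_congr
    intro qq
    rw [S1f]
    apply Finset.sum_congr rfl
    intro ij _
    rw [show a + 1 + 1 + ij.1 = a + 2 + ij.1 from by omega, mul_one_div]
  -- representation of the right-hand sum
  have repr3 : (∑ ij ∈ Finset.HasAntidiagonal.antidiagonal (c + 1 - 1),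
      (-1 : ℝ) ^ ij.2 * (Nat.choose (a + 2 + ij.1 - 1) ij.1) *
        (Nat.choose (b + 2 + ij.2 - 1) ij.2) * T1 (a + 2 + ij.1) * T1 (b + 2 + ij.2))
      = 4 * ∑' qq : OddT × OddT, Rf ((qq.2 : ℕ) : ℝ) ((qq.1 : ℕ) : ℝ) (a + 1) (b + 1) c := by
    rw [show c + 1 - 1 = c from by omega]
    have h1 : ∀ ij ∈ Finset.HasAntidiagonal.antidiagonal c,
        (-1 : ℝ) ^ ij.2 * (Nat.choose (a + 2 + ij.1 - 1) ij.1) *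
          (Nat.choose (b + 2 + ij.2 - 1) ij.2) * T1 (a + 2 + ij.1) * T1 (b + 2 + ij.2)
        = 4 * ∑' qq : OddT × OddT,
            (-1 : ℝ) ^ ij.2 * (Nat.choose (a + 1 + ij.1) ij.1) * (Nat.choose (b + 1 + ij.2) ij.2) *
              (1 / (((qq.1 : ℕ) : ℝ) ^ (a + 2 + ij.1) * ((qq.2 : ℕ) : ℝ) ^ (b + 2 + ij.2))) := by
      intro ij _
      rw [show a + 2 + ij.1 - 1 = a + 1 + ij.1 from by omega,
        show b + 2 + ij.2 - 1 = b + 1 + ij.2 from by omega]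
      rw [show (-1 : ℝ) ^ ij.2 * (Nat.choose (a + 1 + ij.1) ij.1 : ℝ) *
          (Nat.choose (b + 1 + ij.2) ij.2 : ℝ) * T1 (a + 2 + ij.1) * T1 (b + 2 + ij.2)
        = ((-1 : ℝ) ^ ij.2 * (Nat.choose (a + 1 + ij.1) ij.1 : ℝ) *
          (Nat.choose (b + 1 + ij.2) ij.2 : ℝ)) * (T1 (a + 2 + ij.1) * T1 (b + 2 + ij.2))
        from by ring]
      rw [T1_mul (by omega) (by omega), tsum_mul_left]
      ring
    rw [Finset.sum_congr rfl h1, ← Finset.mul_sum]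
    have hsumm : ∀ ij ∈ Finset.HasAntidiagonal.antidiagonal c,
        Summable (fun qq : OddT × OddT =>
          (-1 : ℝ) ^ ij.2 * (Nat.choose (a + 1 + ij.1) ij.1 : ℝ) *
            (Nat.choose (b + 1 + ij.2) ij.2) *
            (1 / (((qq.1 : ℕ) : ℝ) ^ (a + 2 + ij.1) * ((qq.2 : ℕ) : ℝ) ^ (b + 2 + ij.2)))) := by
      intro ij _
      exact (summable_T1prod (by omega) (by omega)).mul_left _
    rw [← Summable.tsum_finsetSum hsumm]
    congr 1
    apply tsum_congr
    intro qq
    rw [Rf]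
    apply Finset.sum_congr rfl
    intro ij _
    rw [show a + 1 + 1 + ij.1 = a + 2 + ij.1 from by omega,
      show b + 1 + 1 + ij.2 = b + 2 + ij.2 from by omega, mul_one_div]
  -- swap the index pair in the second and third tsums
  have swap2 : (∑' qq : OddT × OddT, S1f ((qq.1 : ℕ) : ℝ) ((qq.2 : ℕ) : ℝ) (b + 1) (a + 1) c)
      = ∑' qq : OddT × OddT, S1f ((qq.2 : ℕ) : ℝ) ((qq.1 : ℕ) : ℝ) (b + 1) (a + 1) c :=
    (Equiv.prodComm OddT OddT).tsum_eq
      (fun qq : OddT × OddT => S1f ((qq.2 : ℕ) : ℝ) ((qq.1 : ℕ) : ℝ) (b + 1) (a + 1) c)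
  have swap3 : (∑' qq : OddT × OddT, Rf ((qq.2 : ℕ) : ℝ) ((qq.1 : ℕ) : ℝ) (a + 1) (b + 1) c)
      = ∑' qq : OddT × OddT, Rf ((qq.1 : ℕ) : ℝ) ((qq.2 : ℕ) : ℝ) (a + 1) (b + 1) c :=
    (Equiv.prodComm OddT OddT).tsum_eq
      (fun qq : OddT × OddT => Rf ((qq.1 : ℕ) : ℝ) ((qq.2 : ℕ) : ℝ) (a + 1) (b + 1) c)
  rw [repr1, repr2, repr3, swap2, swap3]
  -- summability of the two S1f families
  have hsum1 : Summable (fun qq : OddT × OddT =>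
      S1f ((qq.1 : ℕ) : ℝ) ((qq.2 : ℕ) : ℝ) (a + 1) (b + 1) c) := by
    simp only [S1f]
    apply summable_sum
    intro ij _
    apply Summable.congr ((summable_T2term (A := b + 1 + 1 + ij.1) (B := c + 1 + ij.2)
      (by omega) (by omega)).mul_left
      ((Nat.choose (b + 1 + ij.1) ij.1 : ℝ) * (Nat.choose (c + ij.2) ij.2)))
    intro qq
    rw [mul_one_div]
  have hsum2 : Summable (fun qq : OddT × OddT =>
      S1f ((qq.2 : ℕ) : ℝ) ((qq.1 : ℕ) : ℝ) (b + 1) (a + 1) c) := by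
    simp only [S1f]
    apply summable_sum
    intro ij _
    apply Summable.congr ((summable_T2term' (A := a + 1 + 1 + ij.1) (B := c + 1 + ij.2)
      (by omega) (by omega)).mul_left
      ((Nat.choose (a + 1 + ij.1) ij.1 : ℝ) * (Nat.choose (c + ij.2) ij.2)))
    intro qq
    rw [mul_one_div]
  -- pointwise key identity
  have main : (∑' qq : OddT × OddT,
      (S1f ((qq.1 : ℕ) : ℝ) ((qq.2 : ℕ) : ℝ) (a + 1) (b + 1) c +
        (-1 : ℝ) ^ c * S1f ((qq.2 : ℕ) : ℝ) ((qq.1 : ℕ) : ℝ) (b + 1) (a + 1) c))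
      = ∑' qq : OddT × OddT, Rf ((qq.1 : ℕ) : ℝ) ((qq.2 : ℕ) : ℝ) (a + 1) (b + 1) c := by
    apply tsum_congr
    intro qq
    have hx : ((qq.1 : ℕ) : ℝ) ≠ 0 := by
      have := qq.1.one_le
      linarith
    have hy : ((qq.2 : ℕ) : ℝ) ≠ 0 := by
      have := qq.2.one_le
      linarith
    have hu : ((qq.1 : ℕ) : ℝ) + ((qq.2 : ℕ) : ℝ) ≠ 0 := by
      have h1 := qq.1.one_le
      have h2 := qq.2.one_le
      linarith
    exact keyMain _ _ hx hy hu (a + 1) (b + 1) c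
  rw [Summable.tsum_add hsum1 (hsum2.mul_left _), tsum_mul_left] at main
  linear_combination 4 * main
end

section
/- Let q be a positive integer and let p≥2 be an integer. Then (1−(−1)^q)·Σ_{i+j=p−1, i,j≥0} C(p+i−1,i)C(q+j−1,j)·ζ(p+i,q+j) = Σ_{i+j=q−1, i,j≥0} (−1)^j·C(p+i−1,i)C(p+j−1,j)·ζ(p+i)·ζ(p+j). In particular, when q is even the right-hand side vanishes. -/
open scoped BigOperators
open MeasureTheory

open Finset

noncomputable def gcert (P s t : ℕ) (i : ℕ) : ℝ :=
  -((-1:ℝ)^i * i * (((P:ℝ)+1+s)-i) * (Nat.choose (P+i) P) * (Nat.choose (P+s-i) P) *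
    (Nat.choose (P+t+1) (P+i)))

lemma cert (P s t i : ℕ) (hP : 1 ≤ P) (hi : i ≤ s) :
    ((t:ℝ)+1) * (((P:ℝ)+s)-t) *
      ((-1:ℝ)^i * (Nat.choose (P+i) P) * (Nat.choose (P+s-i) P) * (Nat.choose (P+t+1) (P+i)))
    - ((P:ℝ)+t+1) * ((P:ℝ)-t) *
      ((-1:ℝ)^i * (Nat.choose (P+i) P) * (Nat.choose (P+s-i) P) * (Nat.choose (P+t) (P+i)))
    = gcert P s t (i+1) - gcert P s t i := by
  rcases le_or_gt i (t+1) with hit | hit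
  · have hAnat : (Nat.choose (P+i) P) * (P+i+1) = (Nat.choose (P+i+1) P) * (i+1) := by
      have := Nat.choose_mul_succ_eq (P+i) P
      have h2 : P+i+1-P = i+1 := by omega
      rwa [h2] at this
    have hBnat : (Nat.choose (P+s-(i+1)) P) * (P+s-i) = (Nat.choose (P+s-i) P) * (s-i) := by
      have := Nat.choose_mul_succ_eq (P+s-i-1) P
      have h1 : P+s-i-1+1 = P+s-i := by omega
      have h2 : P+s-i-P = s-i := by omega
      have h3 : P+s-(i+1) = P+s-i-1 := by omega
      rw [h1, h2] at this
      rwa [h3]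
    have hCnat : (Nat.choose (P+t+1) (P+(i+1))) * (P+i+1) = (Nat.choose (P+t+1) (P+i)) * (t+1-i) := by
      have := Nat.choose_succ_right_eq (P+t+1) (P+i)
      have h1 : P+i+1 = P+(i+1) := by omega
      have h2 : P+t+1-(P+i) = t+1-i := by omega
      rw [h1, h2] at this
      rw [← h1] at this ⊢
      exact this
    have hDnat : (Nat.choose (P+t) (P+i)) * (P+t+1) = (Nat.choose (P+t+1) (P+i)) * (t+1-i) := by
      have := Nat.choose_mul_succ_eq (P+t) (P+i)
      have h2 : P+t+1-(P+i) = t+1-i := by omega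
      rwa [h2] at this
    -- cast to ℝ
    have hsi : ((s-i : ℕ) : ℝ) = (s:ℝ) - i := by
      have := Nat.cast_sub hi (R := ℝ); exact_mod_cast this
    have hti : ((t+1-i : ℕ) : ℝ) = (t:ℝ)+1-i := by
      have : ((t+1-i : ℕ) : ℝ) = ((t+1 : ℕ):ℝ) - i := Nat.cast_sub hit
      rw [this]; push_cast; ring
    have hPsi : ((P+s-i : ℕ) : ℝ) = ((P:ℝ)+s)-i := by
      have : ((P+s-i : ℕ) : ℝ) = ((P+s : ℕ):ℝ) - i := Nat.cast_sub (by omega)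
      rw [this]; push_cast; ring
    set c1 : ℝ := (Nat.choose (P+i) P : ℝ) with hc1
    set c2 : ℝ := (Nat.choose (P+s-i) P : ℝ) with hc2
    set c1' : ℝ := (Nat.choose (P+i+1) P : ℝ) with hc1'
    set c2' : ℝ := (Nat.choose (P+s-(i+1)) P : ℝ) with hc2'
    set X : ℝ := (Nat.choose (P+t) (P+i) : ℝ) with hX
    set Y : ℝ := (Nat.choose (P+t+1) (P+i) : ℝ) with hY
    set Y' : ℝ := (Nat.choose (P+t+1) (P+(i+1)) : ℝ) with hY'
    have hA : c1 * ((P:ℝ)+i+1) = c1' * ((i:ℝ)+1) := by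
      rw [hc1, hc1']; exact_mod_cast congrArg (Nat.cast : ℕ → ℝ) hAnat
    have hB : c2' * (((P:ℝ)+s)-i) = c2 * ((s:ℝ)-i) := by
      rw [hc2, hc2', ← hsi, ← hPsi]; exact_mod_cast congrArg (Nat.cast : ℕ → ℝ) hBnat
    have hC : Y' * ((P:ℝ)+i+1) = Y * ((t:ℝ)+1-i) := by
      rw [hY, hY', ← hti]; exact_mod_cast congrArg (Nat.cast : ℕ → ℝ) hCnat
    have hD : X * ((P:ℝ)+t+1) = Y * ((t:ℝ)+1-i) := by
      rw [hX, hY, ← hti]; exact_mod_cast congrArg (Nat.cast : ℕ → ℝ) hDnat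
    have hM : (((P:ℝ)+i+1) * (((P:ℝ)+s)-i)) ≠ 0 := by
      have h1 : (0:ℝ) < (P:ℝ)+i+1 := by positivity
      have h2 : (0:ℝ) < ((P:ℝ)+s)-i := by
        have : (i:ℝ) ≤ (s:ℝ) := by exact_mod_cast hi
        have hP' : (1:ℝ) ≤ (P:ℝ) := by exact_mod_cast hP
        linarith
      positivity
    apply mul_left_cancel₀ hM
    unfold gcert
    rw [← hc1, ← hc2]
    rw [show (Nat.choose (P+(i+1)) P : ℝ) = c1' by rw [hc1']; norm_num [Nat.add_assoc]]
    rw [← hc2', ← hY, ← hY']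
    push_cast
    set π := (P:ℝ); set σ := (s:ℝ); set τ := (t:ℝ); set ι := (i:ℝ); set e := (-1:ℝ)^i
    have he1 : (-1:ℝ)^(i+1) = -e := by rw [pow_succ]; ring
    rw [he1]
    linear_combination (e*((π+ι+1) * ((π+σ)-ι))*((π+σ)-ι)*c2'*Y') * hA
      + (-(e*((π+ι+1) * ((π+σ)-ι))*(π+ι+1)*c1*Y')) * hB
      + (-(e*((π+ι+1) * ((π+σ)-ι))*(σ-ι)*c1*c2)) * hC
      + (-(((π+ι+1) * ((π+σ)-ι))*e*(π-τ)*c1*c2)) * hD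
  · have h1 : Nat.choose (P+t) (P+i) = 0 := Nat.choose_eq_zero_of_lt (by omega)
    have h2 : Nat.choose (P+t+1) (P+i) = 0 := Nat.choose_eq_zero_of_lt (by omega)
    have h3 : Nat.choose (P+t+1) (P+(i+1)) = 0 := Nat.choose_eq_zero_of_lt (by omega)
    simp [gcert, h1, h2, h3]

noncomputable def LL (P s t : ℕ) : ℝ :=
  ∑ i ∈ Finset.range (s+1),
    (-1:ℝ)^i * (Nat.choose (P+i) P) * (Nat.choose (P+s-i) P) * (Nat.choose (P+t) (P+i))

noncomputable def RR (P s t : ℕ) : ℝ := (Nat.choose (P+t) P : ℝ) * (Nat.choose (P+s-t) s)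

lemma LL_rec (P s t : ℕ) (hP : 1 ≤ P) :
    ((t:ℝ)+1) * (((P:ℝ)+s)-t) * LL P s (t+1) = ((P:ℝ)+t+1) * ((P:ℝ)-t) * LL P s t := by
  have key : ∑ i ∈ Finset.range (s+1), (gcert P s t (i+1) - gcert P s t i)
      = gcert P s t (s+1) - gcert P s t 0 := Finset.sum_range_sub _ _
  have h0 : gcert P s t 0 = 0 := by simp [gcert]
  have h1 : gcert P s t (s+1) = 0 := by
    have : Nat.choose (P+s-(s+1)) P = 0 := Nat.choose_eq_zero_of_lt (by omega)
    simp [gcert, this]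
  rw [h0, h1, sub_zero] at key
  have expand : ((t:ℝ)+1) * (((P:ℝ)+s)-t) * LL P s (t+1) - ((P:ℝ)+t+1) * ((P:ℝ)-t) * LL P s t
      = ∑ i ∈ Finset.range (s+1), (gcert P s t (i+1) - gcert P s t i) := by
    unfold LL
    rw [Finset.mul_sum, Finset.mul_sum, ← Finset.sum_sub_distrib]
    apply Finset.sum_congr rfl
    intro i hi
    have hi' : i ≤ s := by simpa using Nat.lt_succ_iff.mp (Finset.mem_range.mp hi)
    have := cert P s t i hP hi'
    rw [← this]
    norm_num [Nat.add_assoc]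
  linarith [expand, key]

lemma RR_rec (P s t : ℕ) (hP : 1 ≤ P) (ht : t + 1 ≤ P + s) :
    ((t:ℝ)+1) * (((P:ℝ)+s)-t) * RR P s (t+1) = ((P:ℝ)+t+1) * ((P:ℝ)-t) * RR P s t := by
  have n1 : (Nat.choose (P+t+1) P) * (t+1) = (Nat.choose (P+t) P) * (P+t+1) := by
    have := Nat.choose_mul_succ_eq (P+t) P
    have h2 : P+t+1-P = t+1 := by omega
    rw [h2] at this; omega
  rcases le_or_gt t P with htP | htP
  · have n2 : (Nat.choose (P+s-(t+1)) s) * (P+s-t) = (Nat.choose (P+s-t) s) * (P-t) := by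
      have := Nat.choose_mul_succ_eq (P+s-t-1) s
      have h1 : P+s-t-1+1 = P+s-t := by omega
      have h2 : P+s-t-s = P-t := by omega
      have h3 : P+s-(t+1) = P+s-t-1 := by omega
      rw [h1, h2] at this; rw [h3]; omega
    have c1 : ((P+s-t : ℕ) : ℝ) = ((P:ℝ)+s)-t := by
      have : ((P+s-t : ℕ) : ℝ) = ((P+s : ℕ):ℝ) - t := Nat.cast_sub (by omega)
      rw [this]; push_cast; ring
    have c2 : ((P-t : ℕ) : ℝ) = (P:ℝ)-t := by
      have : ((P-t : ℕ) : ℝ) = ((P : ℕ):ℝ) - t := Nat.cast_sub htP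
      rw [this]
    have n1' := congrArg (Nat.cast : ℕ → ℝ) n1
    have n2' := congrArg (Nat.cast : ℕ → ℝ) n2
    push_cast at n1' n2'
    rw [c1, c2] at n2'
    unfold RR
    have harg : P+(t+1) = P+t+1 := by omega
    rw [harg]
    push_cast
    linear_combination ((((P:ℝ)+s)-(t:ℝ)) * ((Nat.choose (P+s-(t+1)) s : ℕ):ℝ)) * n1'
      + (((P:ℝ)+(t:ℝ)+1) * ((Nat.choose (P+t) P : ℕ):ℝ)) * n2'
  · have z1 : Nat.choose (P+s-(t+1)) s = 0 := Nat.choose_eq_zero_of_lt (by omega)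
    have z2 : Nat.choose (P+s-t) s = 0 := Nat.choose_eq_zero_of_lt (by omega)
    unfold RR
    rw [z1, z2]
    push_cast
    ring

lemma LL_eq_RR (P s : ℕ) (hP : 1 ≤ P) : ∀ t, t ≤ P + s → LL P s t = RR P s t := by
  intro t
  induction t with
  | zero =>
    intro _
    unfold LL RR
    rw [Finset.sum_eq_single_of_mem 0 (Finset.mem_range.mpr (by omega))]
    · simp only [Nat.add_zero, Nat.sub_zero, Nat.choose_self, Nat.cast_one, pow_zero]
      rw [Nat.choose_symm_add]
      ring
    · intro i _ hi0
      have h : Nat.choose (P+0) (P+i) = 0 := Nat.choose_eq_zero_of_lt (by omega)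
      simp only [h, Nat.cast_zero, mul_zero]
  | succ t ih =>
    intro ht
    have h1 := LL_rec P s t hP
    have h2 := RR_rec P s t hP ht
    rw [ih (by omega)] at h1
    have hfac : ((t:ℝ)+1) * (((P:ℝ)+s)-t) ≠ 0 := by
      have hts : (t:ℝ) ≤ (P:ℝ)+s-1 := by
        have : (t:ℝ)+1 ≤ ((P:ℝ)+s) := by exact_mod_cast ht
        linarith
      have : (0:ℝ) < ((P:ℝ)+s)-t := by linarith
      positivity
    have := h1.trans h2.symm
    exact mul_left_cancel₀ hfac this

lemma BL (P s t : ℕ) (hP : 1 ≤ P) (ht : t ≤ P + s) :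
    ∑ ij ∈ Finset.HasAntidiagonal.antidiagonal s,
      (-1:ℝ)^ij.1 * (Nat.choose (P+ij.1) P) * (Nat.choose (P+ij.2) P) *
        (Nat.choose (P+t) (P+ij.1))
    = (Nat.choose (P+t) P : ℝ) * (Nat.choose (P+s-t) s) := by
  rw [Finset.Nat.sum_antidiagonal_eq_sum_range_succ_mk]
  rw [← RR, ← LL_eq_RR P s hP t ht]
  unfold LL
  apply Finset.sum_congr rfl
  intro k hk
  have hk' : k ≤ s := by have := Finset.mem_range.mp hk; omega
  have h2 : P + (s-k) = P+s-k := by omega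
  simp [h2]

noncomputable def S1 (A B : ℕ) (x w : ℝ) : ℝ :=
  ∑ i ∈ Finset.range (A+1), (Nat.choose (B+i) i : ℝ) / (x^(A+1-i) * w^(B+1+i))

lemma S1_step (A B : ℕ) (x w : ℝ) (hw : w ≠ 0) :
    (1/w) * S1 A (B+1) x w + (1/w) * S1 (A+1) B x w = S1 (A+1) (B+1) x w := by
  have key : ∀ (e m : ℕ) (c : ℝ), (1/w) * (c/(x^e * w^m)) = c/(x^e*w^(m+1)) := by
    intro e m c
    rw [one_div_mul_eq_div, div_div, pow_succ, mul_assoc]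
  unfold S1
  rw [Finset.mul_sum, Finset.mul_sum]
  simp only [key]
  rw [Finset.sum_range_succ' (fun i => (Nat.choose (B+1+i) i : ℝ) / (x^(A+1+1-i) * w^(B+1+1+i))) (A+1)]
  rw [Finset.sum_range_succ' (fun i => (Nat.choose (B+i) i : ℝ) / (x^(A+1+1-i) * w^(B+1+i+1))) (A+1)]
  rw [← add_assoc, ← Finset.sum_add_distrib]
  congr 1
  · apply Finset.sum_congr rfl
    intro i _
    have hx1 : A+1+1-(i+1) = A+1-i := by omega
    have hw1 : B+1+(i+1)+1 = B+1+1+i+1 := by omega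
    have hw2 : B+1+1+(i+1) = B+1+1+i+1 := by omega
    rw [hx1, hw1, hw2, ← add_div]
    congr 1
    have hp : Nat.choose (B+1+(i+1)) (i+1) = Nat.choose (B+1+i) i + Nat.choose (B+1+i) (i+1) := by
      rw [show B+1+(i+1) = (B+1+i)+1 by omega]
      exact Nat.choose_succ_succ' (B+1+i) i
    have hq : Nat.choose (B+(i+1)) (i+1) = Nat.choose (B+1+i) (i+1) := by
      congr 1; omega
    rw [hq, hp]
    push_cast
    ring
  · norm_num

lemma S1_single (B : ℕ) (z w : ℝ) : S1 0 (B+1) z w = (1/w) * S1 0 B z w := by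
  unfold S1
  simp only [zero_add, Finset.sum_range_one, Nat.add_zero, Nat.choose_zero_right,
    Nat.cast_one, pow_one]
  rw [one_div_mul_eq_div, div_div]
  congr 1
  rw [show B+1+1 = (B+1)+1 from rfl, pow_succ]
  ring

lemma S1_peel (A : ℕ) (z w : ℝ) :
    S1 (A+1) 0 z w = (1/w) * S1 A 0 z w + (1/w) * (1/z^(A+1+1)) := by
  unfold S1
  rw [Finset.sum_range_succ' (fun i => (Nat.choose (0+i) i : ℝ) / (z^(A+1+1-i) * w^(0+1+i))) (A+1)]
  rw [Finset.mul_sum]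
  congr 1
  · apply Finset.sum_congr rfl
    intro i _
    simp only [Nat.zero_add, Nat.choose_self, Nat.cast_one]
    rw [one_div_mul_eq_div, div_div]
    congr 1
    rw [show A+1+1-(i+1) = A+1-i by omega, show 1+(i+1) = (1+i)+1 by omega, pow_succ]
    ring
  · simp only [Nat.zero_add, Nat.add_zero, Nat.sub_zero, Nat.choose_self, Nat.cast_one, pow_one]
    rw [one_div_mul_eq_div, div_div]

lemma pf0 (B : ℕ) : ∀ (x y : ℝ), 0 < x → 0 < y →
    1/(x^(0+1) * y^(B+1)) = S1 0 B x (x+y) + S1 B 0 y (x+y) := by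
  induction B with
  | zero =>
    intro x y hx hy
    have hxy : (0:ℝ) < x + y := by linarith
    unfold S1
    simp only [zero_add, Finset.sum_range_one]
    norm_num
    field_simp
    ring
  | succ B ih =>
    intro x y hx hy
    have hxy : (0:ℝ) < x + y := by linarith
    have hw : (x+y) ≠ 0 := ne_of_gt hxy
    have split : 1/(x^(0+1) * y^(B+1+1))
        = (1/(x+y)) * (1/(x^(0+1)*y^(B+1))) + (1/(x+y)) * (1/y^(B+1+1)) := by
      field_simp
      ring
    rw [split, ih x y hx hy, S1_single B x (x+y), S1_peel B y (x+y)]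
    ring

lemma pf (A : ℕ) : ∀ (B : ℕ) (x y : ℝ), 0 < x → 0 < y →
    1/(x^(A+1) * y^(B+1)) = S1 A B x (x+y) + S1 B A y (x+y) := by
  induction A with
  | zero => exact pf0
  | succ A ihA =>
    intro B
    induction B with
    | zero =>
      intro x y hx hy
      have hxy : (0:ℝ) < x + y := by linarith
      have hw : (x+y) ≠ 0 := ne_of_gt hxy
      have split : 1/(x^(A+1+1) * y^(0+1))
          = (1/(x+y)) * (1/(x^(A+1)*y^(0+1))) + (1/(x+y)) * (1/x^(A+1+1)) := by
        field_simp
        ring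
      rw [split, ihA 0 x y hx hy, S1_single A y (x+y)]
      have := S1_peel A x (x+y)
      rw [this]
      ring
    | succ B ihB =>
      intro x y hx hy
      have hxy : (0:ℝ) < x + y := by linarith
      have hw : (x+y) ≠ 0 := ne_of_gt hxy
      have split : 1/(x^(A+1+1) * y^(B+1+1))
          = (1/(x+y)) * (1/(x^(A+1)*y^(B+1+1))) + (1/(x+y)) * (1/(x^(A+1+1)*y^(B+1))) := by
        field_simp
        ring
      rw [split, ihA (B+1) x y hx hy, ihB x y hx hy]
      have h1 := S1_step A B x (x+y) hw
      have h2 := S1_step B A y (x+y) hw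
      linarith [h1, h2]

lemma summable_zeta (a : ℕ) (ha : 2 ≤ a) :
    Summable (fun n : {n : ℕ // 0 < n} => 1/(n.1:ℝ)^a) := by
  have h : Summable (fun n : ℕ => 1/(n:ℝ)^a) := Real.summable_one_div_nat_pow.2 (by omega)
  exact h.subtype _

def prodEquiv1 : ({n : ℕ // 0 < n} × {n : ℕ // 0 < n}) ≃ {p : ℕ × ℕ // p.2 < p.1 ∧ 0 < p.2} where
  toFun x := ⟨(x.1.1 + x.2.1, x.1.1), by
    refine ⟨?_, x.1.2⟩
    have := x.2.2
    omega⟩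
  invFun y := (⟨y.1.2, y.2.2⟩, ⟨y.1.1 - y.1.2, by have := y.2.1; omega⟩)
  left_inv x := by
    ext
    · rfl
    · show x.1.1 + x.2.1 - x.1.1 = x.2.1
      omega
  right_inv y := by
    apply Subtype.ext
    have := y.2.1
    apply Prod.ext
    · show y.1.2 + (y.1.1 - y.1.2) = y.1.1
      omega
    · rfl

def prodEquiv2 : ({n : ℕ // 0 < n} × {n : ℕ // 0 < n}) ≃ {p : ℕ × ℕ // p.2 < p.1 ∧ 0 < p.2} where
  toFun x := ⟨(x.1.1 + x.2.1, x.2.1), by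
    refine ⟨?_, x.2.2⟩
    have := x.1.2
    omega⟩
  invFun y := (⟨y.1.1 - y.1.2, by have := y.2.1; omega⟩, ⟨y.1.2, y.2.2⟩)
  left_inv x := by
    ext
    · show x.1.1 + x.2.1 - x.2.1 = x.1.1
      omega
    · rfl
  right_inv y := by
    apply Subtype.ext
    have := y.2.1
    apply Prod.ext
    · show y.1.1 - y.1.2 + y.1.2 = y.1.1
      omega
    · rfl

lemma tsum_aux1 (c d : ℕ) :
    ∑' x : ({n : ℕ // 0 < n} × {n : ℕ // 0 < n}),
      1/((x.1.1:ℝ)^c * ((x.1.1:ℝ) + (x.2.1:ℝ))^d) = zeta2 d c := by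
  unfold zeta2
  rw [← Equiv.tsum_eq prodEquiv1 (fun p : {p : ℕ × ℕ // p.2 < p.1 ∧ 0 < p.2} =>
    1 / ((p.1.1 : ℝ) ^ d * (p.1.2 : ℝ) ^ c))]
  apply tsum_congr
  intro x
  show 1/((x.1.1:ℝ)^c * ((x.1.1:ℝ) + (x.2.1:ℝ))^d)
      = 1 / (((x.1.1 + x.2.1 : ℕ) : ℝ) ^ d * (x.1.1 : ℝ) ^ c)
  push_cast
  ring_nf

lemma tsum_aux2 (c d : ℕ) :
    ∑' x : ({n : ℕ // 0 < n} × {n : ℕ // 0 < n}),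
      1/((x.2.1:ℝ)^c * ((x.1.1:ℝ) + (x.2.1:ℝ))^d) = zeta2 d c := by
  unfold zeta2
  rw [← Equiv.tsum_eq prodEquiv2 (fun p : {p : ℕ × ℕ // p.2 < p.1 ∧ 0 < p.2} =>
    1 / ((p.1.1 : ℝ) ^ d * (p.1.2 : ℝ) ^ c))]
  apply tsum_congr
  intro x
  show 1/((x.2.1:ℝ)^c * ((x.1.1:ℝ) + (x.2.1:ℝ))^d)
      = 1 / (((x.1.1 + x.2.1 : ℕ) : ℝ) ^ d * (x.2.1 : ℝ) ^ c)
  push_cast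
  ring_nf

set_option maxHeartbeats 1000000 in
lemma euler (A B : ℕ) (hA : 1 ≤ A) (hB : 1 ≤ B) :
    zeta1 (A+1) * zeta1 (B+1)
      = (∑ i ∈ Finset.range (A+1), (Nat.choose (B+i) i : ℝ) * zeta2 (B+1+i) (A+1-i))
      + (∑ j ∈ Finset.range (B+1), (Nat.choose (A+j) j : ℝ) * zeta2 (A+1+j) (B+1-j)) := by
  classical
  have hf : Summable (fun x : ({n : ℕ // 0 < n} × {n : ℕ // 0 < n}) =>
      (1/(x.1.1:ℝ)^(A+1)) * (1/(x.2.1:ℝ)^(B+1))) :=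
    Summable.mul_of_nonneg (f := fun m : {n:ℕ//0<n} => 1/(m.1:ℝ)^(A+1))
      (g := fun m : {n:ℕ//0<n} => 1/(m.1:ℝ)^(B+1))
      (summable_zeta (A+1) (by omega)) (summable_zeta (B+1) (by omega))
      (Pi.le_def.mpr fun n => by positivity) (Pi.le_def.mpr fun n => by positivity)
  have h1 : zeta1 (A+1) * zeta1 (B+1) = ∑' x : ({n : ℕ // 0 < n} × {n : ℕ // 0 < n}),
      (1/(x.1.1:ℝ)^(A+1)) * (1/(x.2.1:ℝ)^(B+1)) := by
    have hinner : ∀ m : {n:ℕ//0<n}, Summable (fun c : {n:ℕ//0<n} =>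
        (1/(m.1:ℝ)^(A+1)) * (1/(c.1:ℝ)^(B+1))) :=
      fun m => Summable.mul_left _ (summable_zeta (B+1) (by omega))
    have h2 : (∑' (x : ({n:ℕ//0<n} × {n:ℕ//0<n})), (1/(x.1.1:ℝ)^(A+1)) * (1/(x.2.1:ℝ)^(B+1)))
        = ∑' (m : {n:ℕ//0<n}) (c : {n:ℕ//0<n}), (1/(m.1:ℝ)^(A+1)) * (1/(c.1:ℝ)^(B+1)) :=
      Summable.tsum_prod' hf hinner
    rw [h2]
    unfold zeta1
    simp_rw [tsum_mul_left]
    rw [tsum_mul_right]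
  have hpt : ∀ x : ({n : ℕ // 0 < n} × {n : ℕ // 0 < n}),
      (1/(x.1.1:ℝ)^(A+1)) * (1/(x.2.1:ℝ)^(B+1))
      = (∑ i ∈ Finset.range (A+1), (Nat.choose (B+i) i : ℝ) *
          (1/((x.1.1:ℝ)^(A+1-i) * ((x.1.1:ℝ)+(x.2.1:ℝ))^(B+1+i))))
      + (∑ j ∈ Finset.range (B+1), (Nat.choose (A+j) j : ℝ) *
          (1/((x.2.1:ℝ)^(B+1-j) * ((x.1.1:ℝ)+(x.2.1:ℝ))^(A+1+j)))) := by
    intro x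
    have hx : (0:ℝ) < x.1.1 := by exact_mod_cast x.1.2
    have hy : (0:ℝ) < x.2.1 := by exact_mod_cast x.2.2
    have hmain := pf A B _ _ hx hy
    unfold S1 at hmain
    rw [div_mul_div_comm, one_mul, hmain]
    congr 1
    · exact Finset.sum_congr rfl fun i _ => (mul_one_div _ _).symm
    · exact Finset.sum_congr rfl fun j _ => (mul_one_div _ _).symm
  have hle1 : ∀ i ∈ Finset.range (A+1), ∀ x : ({n : ℕ // 0 < n} × {n : ℕ // 0 < n}),
      (Nat.choose (B+i) i : ℝ) * (1/((x.1.1:ℝ)^(A+1-i) * ((x.1.1:ℝ)+(x.2.1:ℝ))^(B+1+i)))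
      ≤ (1/(x.1.1:ℝ)^(A+1)) * (1/(x.2.1:ℝ)^(B+1)) := by
    intro i hi x
    rw [hpt x]
    have h1 : (Nat.choose (B+i) i : ℝ) *
        (1/((x.1.1:ℝ)^(A+1-i) * ((x.1.1:ℝ)+(x.2.1:ℝ))^(B+1+i)))
        ≤ ∑ i ∈ Finset.range (A+1), (Nat.choose (B+i) i : ℝ) *
          (1/((x.1.1:ℝ)^(A+1-i) * ((x.1.1:ℝ)+(x.2.1:ℝ))^(B+1+i))) :=
      Finset.single_le_sum (f := fun k => (Nat.choose (B+k) k : ℝ) *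
        (1/((x.1.1:ℝ)^(A+1-k) * ((x.1.1:ℝ)+(x.2.1:ℝ))^(B+1+k)))) (fun k _ => by positivity) hi
    have h2 : (0:ℝ) ≤ ∑ j ∈ Finset.range (B+1), (Nat.choose (A+j) j : ℝ) *
        (1/((x.2.1:ℝ)^(B+1-j) * ((x.1.1:ℝ)+(x.2.1:ℝ))^(A+1+j))) :=
      Finset.sum_nonneg fun j _ => by positivity
    linarith
  have hle2 : ∀ j ∈ Finset.range (B+1), ∀ x : ({n : ℕ // 0 < n} × {n : ℕ // 0 < n}),
      (Nat.choose (A+j) j : ℝ) * (1/((x.2.1:ℝ)^(B+1-j) * ((x.1.1:ℝ)+(x.2.1:ℝ))^(A+1+j)))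
      ≤ (1/(x.1.1:ℝ)^(A+1)) * (1/(x.2.1:ℝ)^(B+1)) := by
    intro j hj x
    rw [hpt x]
    have h1 : (Nat.choose (A+j) j : ℝ) *
        (1/((x.2.1:ℝ)^(B+1-j) * ((x.1.1:ℝ)+(x.2.1:ℝ))^(A+1+j)))
        ≤ ∑ j ∈ Finset.range (B+1), (Nat.choose (A+j) j : ℝ) *
          (1/((x.2.1:ℝ)^(B+1-j) * ((x.1.1:ℝ)+(x.2.1:ℝ))^(A+1+j))) :=
      Finset.single_le_sum (f := fun k => (Nat.choose (A+k) k : ℝ) *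
        (1/((x.2.1:ℝ)^(B+1-k) * ((x.1.1:ℝ)+(x.2.1:ℝ))^(A+1+k)))) (fun k _ => by positivity) hj
    have h2 : (0:ℝ) ≤ ∑ i ∈ Finset.range (A+1), (Nat.choose (B+i) i : ℝ) *
        (1/((x.1.1:ℝ)^(A+1-i) * ((x.1.1:ℝ)+(x.2.1:ℝ))^(B+1+i))) :=
      Finset.sum_nonneg fun i _ => by positivity
    linarith
  have hsumm1 : ∀ i ∈ Finset.range (A+1), Summable (fun x : ({n : ℕ // 0 < n} × {n : ℕ // 0 < n}) =>
      (Nat.choose (B+i) i : ℝ) * (1/((x.1.1:ℝ)^(A+1-i) * ((x.1.1:ℝ)+(x.2.1:ℝ))^(B+1+i)))) :=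
    fun i hi => Summable.of_nonneg_of_le (fun x => by positivity) (hle1 i hi) hf
  have hsumm2 : ∀ j ∈ Finset.range (B+1), Summable (fun x : ({n : ℕ // 0 < n} × {n : ℕ // 0 < n}) =>
      (Nat.choose (A+j) j : ℝ) * (1/((x.2.1:ℝ)^(B+1-j) * ((x.1.1:ℝ)+(x.2.1:ℝ))^(A+1+j)))) :=
    fun j hj => Summable.of_nonneg_of_le (fun x => by positivity) (hle2 j hj) hf
  rw [h1, tsum_congr hpt]
  rw [Summable.tsum_add (summable_sum hsumm1) (summable_sum hsumm2)]
  rw [Summable.tsum_finsetSum hsumm1, Summable.tsum_finsetSum hsumm2]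
  congr 1
  · apply Finset.sum_congr rfl
    intro i _
    rw [tsum_mul_left, tsum_aux1]
  · apply Finset.sum_congr rfl
    intro j _
    rw [tsum_mul_left, tsum_aux2]

lemma euler' (a b : ℕ) (ha : 2 ≤ a) (hb : 2 ≤ b) :
    zeta1 a * zeta1 b
      = (∑ i ∈ Finset.range a, (Nat.choose (b-1+i) i : ℝ) * zeta2 (b+i) (a-i))
      + (∑ j ∈ Finset.range b, (Nat.choose (a-1+j) j : ℝ) * zeta2 (a+j) (b-j)) := by
  obtain ⟨A, rfl⟩ : ∃ A, a = A+1 := ⟨a-1, by omega⟩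
  obtain ⟨B, rfl⟩ : ∃ B, b = B+1 := ⟨b-1, by omega⟩
  have := euler A B (by omega) (by omega)
  simpa only [Nat.add_sub_cancel] using this

lemma neg_one_pow_eq (i j : ℕ) (h : (i + j) % 2 = 0) : (-1:ℝ)^i = (-1:ℝ)^j := by
  rcases Nat.even_or_odd i with hi | hi
  · have hj : Even j := by
      rcases Nat.even_or_odd j with h' | h'
      · exact h'
      · exfalso; rw [Nat.even_iff] at hi; rw [Nat.odd_iff] at h'; omega
    rw [hi.neg_one_pow, hj.neg_one_pow]
  · have hj : Odd j := by
      rcases Nat.even_or_odd j with h' | h'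
      · exfalso; rw [Nat.even_iff] at h'; rw [Nat.odd_iff] at hi; omega
      · exact h'
    rw [hi.neg_one_pow, hj.neg_one_pow]

lemma rhs_zero (p q : ℕ) (hq : 0 < q) (he : q % 2 = 0) :
    (∑ ij ∈ Finset.HasAntidiagonal.antidiagonal (q-1),
      (-1 : ℝ) ^ ij.2 * (Nat.choose (p + ij.1 - 1) ij.1) *
        (Nat.choose (p + ij.2 - 1) ij.2) * zeta1 (p + ij.1) * zeta1 (p + ij.2)) = 0 := by
  set f : ℕ × ℕ → ℝ := fun ij => (-1 : ℝ) ^ ij.2 * (Nat.choose (p + ij.1 - 1) ij.1) *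
        (Nat.choose (p + ij.2 - 1) ij.2) * zeta1 (p + ij.1) * zeta1 (p + ij.2) with hf
  have h1 : ∑ ij ∈ Finset.HasAntidiagonal.antidiagonal (q-1), f ij
      = ∑ ij ∈ Finset.HasAntidiagonal.antidiagonal (q-1), f ij.swap := by
    conv_lhs => rw [← Finset.HasAntidiagonal.map_swap_antidiagonal]
    rw [Finset.sum_map]
    rfl
  have h2 : ∀ ij ∈ Finset.HasAntidiagonal.antidiagonal (q-1), f ij + f ij.swap = 0 := by
    intro ij hij
    have hmem : ij.1 + ij.2 = q - 1 := Finset.HasAntidiagonal.mem_antidiagonal.mp hij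
    have hodd : (ij.1 + ij.2) % 2 = 1 := by omega
    have hsign : (-1:ℝ)^ij.1 = -(-1:ℝ)^ij.2 := by
      have hh : (-1:ℝ)^(ij.1+ij.2) = -1 := Odd.neg_one_pow (Nat.odd_iff.mpr hodd)
      rw [pow_add] at hh
      have h4 : ((-1:ℝ)^ij.2) * ((-1:ℝ)^ij.2) = 1 := by
        rw [← pow_add]
        exact Even.neg_one_pow (by rw [Nat.even_iff]; omega)
      calc (-1:ℝ)^ij.1 = (-1:ℝ)^ij.1 * (((-1:ℝ)^ij.2) * ((-1:ℝ)^ij.2)) := by rw [h4]; ring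
        _ = ((-1:ℝ)^ij.1 * (-1:ℝ)^ij.2) * (-1:ℝ)^ij.2 := by ring
        _ = -1 * (-1:ℝ)^ij.2 := by rw [hh]
        _ = -(-1:ℝ)^ij.2 := by ring
    rw [hf]
    simp only [Prod.fst_swap, Prod.snd_swap]
    rw [hsign]
    ring
  have h3 : (∑ ij ∈ Finset.HasAntidiagonal.antidiagonal (q-1), f ij) + (∑ ij ∈ Finset.HasAntidiagonal.antidiagonal (q-1), f ij) = 0 := by
    nth_rewrite 2 [h1]
    rw [← Finset.sum_add_distrib]
    exact Finset.sum_eq_zero h2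
  linarith [h3]

lemma sum2_eq (p q i j : ℕ) (hp : 2 ≤ p) (hq : 0 < q) (hij : i + j = q - 1) :
    ∑ k ∈ Finset.range (p+j), (Nat.choose (p+i-1+k) k : ℝ) * zeta2 (p+i+k) (p+j-k)
    = ∑ u ∈ Finset.Ico p (2*p+q-1), (Nat.choose (u-1) (p+i-1) : ℝ) * zeta2 u (2*p+q-1-u) := by
  rw [← Finset.sum_Ico_consecutive _ (show p ≤ p+i by omega) (show p+i ≤ 2*p+q-1 by omega)]
  have hz : ∑ u ∈ Finset.Ico p (p+i), (Nat.choose (u-1) (p+i-1) : ℝ) * zeta2 u (2*p+q-1-u) = 0 := by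
    apply Finset.sum_eq_zero
    intro u hu
    have hu' := Finset.mem_Ico.mp hu
    have hz0 : Nat.choose (u-1) (p+i-1) = 0 := Nat.choose_eq_zero_of_lt (by omega)
    rw [hz0]
    norm_num
  rw [hz, zero_add, Finset.sum_Ico_eq_sum_range]
  have hlen : 2*p+q-1-(p+i) = p+j := by omega
  rw [hlen]
  apply Finset.sum_congr rfl
  intro k hk
  congr 1
  · congr 1
    have h1 : p+i+k-1 = p+i-1+k := by omega
    rw [h1]
    have h2 := Nat.choose_symm (show k ≤ p+i-1+k by omega)
    have h3 : p+i-1+k-k = p+i-1 := by omega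
    rw [h3] at h2
    exact h2.symm
  · congr 1
    omega

lemma inner_eq (p q u : ℕ) (hp : 2 ≤ p) (hq : 0 < q) (hqodd : q % 2 = 1)
    (hu1 : p ≤ u) (hu2 : u < 2*p+q-1) :
    ∑ ij ∈ Finset.HasAntidiagonal.antidiagonal (q-1),
      (-1:ℝ)^ij.2 * (Nat.choose (p+ij.1-1) ij.1) * (Nat.choose (p+ij.2-1) ij.2) *
        (Nat.choose (u-1) (p+ij.1-1))
    = (Nat.choose (u-1) (p-1) : ℝ) * (Nat.choose (2*p+q-2-u) (q-1)) := by
  have hBL := BL (p-1) (q-1) (u-p) (by omega) (by omega)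
  have h1 : p-1+(u-p) = u-1 := by omega
  have h2 : p-1+(q-1)-(u-p) = 2*p+q-2-u := by omega
  rw [h1, h2] at hBL
  rw [← hBL]
  apply Finset.sum_congr rfl
  intro ij hij
  have hmem : ij.1 + ij.2 = q - 1 := Finset.HasAntidiagonal.mem_antidiagonal.mp hij
  have hsign : (-1:ℝ)^ij.2 = (-1:ℝ)^ij.1 := neg_one_pow_eq _ _ (by omega)
  have hc1 : Nat.choose (p+ij.1-1) ij.1 = Nat.choose (p-1+ij.1) (p-1) := by
    rw [show p+ij.1-1 = p-1+ij.1 by omega]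
    exact (Nat.choose_symm_add).symm
  have hc2 : Nat.choose (p+ij.2-1) ij.2 = Nat.choose (p-1+ij.2) (p-1) := by
    rw [show p+ij.2-1 = p-1+ij.2 by omega]
    exact (Nat.choose_symm_add).symm
  have hc3 : Nat.choose (u-1) (p+ij.1-1) = Nat.choose (u-1) (p-1+ij.1) := by
    rw [show p+ij.1-1 = p-1+ij.1 by omega]
  rw [hsign, hc1, hc2, hc3]

lemma final_eq (p q : ℕ) (hp : 2 ≤ p) (hq : 0 < q) :
    ∑ u ∈ Finset.Ico p (2*p+q-1),
      ((Nat.choose (u-1) (p-1) : ℝ) * (Nat.choose (2*p+q-2-u) (q-1))) * zeta2 u (2*p+q-1-u)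
    = ∑ ij ∈ Finset.HasAntidiagonal.antidiagonal (p - 1),
        (Nat.choose (p + ij.1 - 1) ij.1 : ℝ) * (Nat.choose (q + ij.2 - 1) ij.2) *
          zeta2 (p + ij.1) (q + ij.2) := by
  rw [Finset.Nat.sum_antidiagonal_eq_sum_range_succ_mk]
  rw [show (p-1).succ = p by omega]
  rw [← Finset.sum_subset (Finset.Ico_subset_Ico_right (show 2*p ≤ 2*p+q-1 by omega))
    (by
      intro u hu hnot
      have h1 := Finset.mem_Ico.mp hu
      have h2 : 2*p ≤ u := by
        by_contra hcon
        exact hnot (Finset.mem_Ico.mpr ⟨h1.1, by omega⟩)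
      have hz : Nat.choose (2*p+q-2-u) (q-1) = 0 := Nat.choose_eq_zero_of_lt (by omega)
      rw [hz]
      norm_num)]
  rw [Finset.sum_Ico_eq_sum_range]
  rw [show 2*p-p = p by omega]
  apply Finset.sum_congr rfl
  intro k hk
  have hk' : k < p := Finset.mem_range.mp hk
  have e1 : Nat.choose (p+k-1) (p-1) = Nat.choose (p+k-1) k := by
    rw [show p+k-1 = p-1+k by omega]
    exact Nat.choose_symm_add
  have e2 : Nat.choose (2*p+q-2-(p+k)) (q-1) = Nat.choose (q+(p-1-k)-1) (p-1-k) := by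
    rw [show 2*p+q-2-(p+k) = q+(p-1-k)-1 by omega]
    have h2 := Nat.choose_symm (show p-1-k ≤ q+(p-1-k)-1 by omega)
    rw [show q+(p-1-k)-1-(p-1-k) = q-1 by omega] at h2
    exact h2
  have e3 : p+k-1 = p+k-1 := rfl
  rw [show 2*p+q-1-(p+k) = q+(p-1-k) by omega]
  rw [e1, e2]

noncomputable def SB (p : ℕ) (ij : ℕ × ℕ) : ℝ :=
  ∑ k ∈ Finset.range (p+ij.2), (Nat.choose (p+ij.1-1+k) k : ℝ) * zeta2 (p+ij.1+k) (p+ij.2-k)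

lemma main_odd (p q : ℕ) (hqodd : q % 2 = 1) (hp : 2 ≤ p) :
    (∑ ij ∈ Finset.HasAntidiagonal.antidiagonal (q - 1),
        (-1 : ℝ) ^ ij.2 * (Nat.choose (p + ij.1 - 1) ij.1) *
          (Nat.choose (p + ij.2 - 1) ij.2) * zeta1 (p + ij.1) * zeta1 (p + ij.2))
    = 2 * ∑ ij ∈ Finset.HasAntidiagonal.antidiagonal (p - 1),
        (Nat.choose (p + ij.1 - 1) ij.1 : ℝ) * (Nat.choose (q + ij.2 - 1) ij.2) *
          zeta2 (p + ij.1) (q + ij.2) := by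
  have hq : 0 < q := by omega
  have step1 : (∑ ij ∈ Finset.HasAntidiagonal.antidiagonal (q - 1),
        (-1 : ℝ) ^ ij.2 * (Nat.choose (p + ij.1 - 1) ij.1) *
          (Nat.choose (p + ij.2 - 1) ij.2) * zeta1 (p + ij.1) * zeta1 (p + ij.2))
      = (∑ ij ∈ Finset.HasAntidiagonal.antidiagonal (q - 1),
          (-1 : ℝ) ^ ij.2 * (Nat.choose (p + ij.1 - 1) ij.1) *
            (Nat.choose (p + ij.2 - 1) ij.2) * SB p ij.swap)
      + (∑ ij ∈ Finset.HasAntidiagonal.antidiagonal (q - 1),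
          (-1 : ℝ) ^ ij.2 * (Nat.choose (p + ij.1 - 1) ij.1) *
            (Nat.choose (p + ij.2 - 1) ij.2) * SB p ij) := by
    rw [← Finset.sum_add_distrib]
    apply Finset.sum_congr rfl
    intro ij hij
    have he := euler' (p+ij.1) (p+ij.2) (by omega) (by omega)
    have hz : zeta1 (p+ij.1) * zeta1 (p+ij.2) = SB p ij.swap + SB p ij := by
      rw [he]
      rfl
    calc (-1 : ℝ) ^ ij.2 * (Nat.choose (p + ij.1 - 1) ij.1) *
          (Nat.choose (p + ij.2 - 1) ij.2) * zeta1 (p + ij.1) * zeta1 (p + ij.2)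
        = (-1 : ℝ) ^ ij.2 * (Nat.choose (p + ij.1 - 1) ij.1) *
          (Nat.choose (p + ij.2 - 1) ij.2) * (zeta1 (p + ij.1) * zeta1 (p + ij.2)) := by ring
      _ = _ := by rw [hz]; ring
  have step2 : (∑ ij ∈ Finset.HasAntidiagonal.antidiagonal (q - 1),
          (-1 : ℝ) ^ ij.2 * (Nat.choose (p + ij.1 - 1) ij.1) *
            (Nat.choose (p + ij.2 - 1) ij.2) * SB p ij.swap)
      = (∑ ij ∈ Finset.HasAntidiagonal.antidiagonal (q - 1),
          (-1 : ℝ) ^ ij.2 * (Nat.choose (p + ij.1 - 1) ij.1) *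
            (Nat.choose (p + ij.2 - 1) ij.2) * SB p ij) := by
    conv_lhs => rw [← Finset.HasAntidiagonal.map_swap_antidiagonal]
    rw [Finset.sum_map]
    apply Finset.sum_congr rfl
    intro ij hij
    have hmem : ij.1 + ij.2 = q - 1 := Finset.HasAntidiagonal.mem_antidiagonal.mp hij
    show (-1 : ℝ) ^ ij.swap.2 * (Nat.choose (p + ij.swap.1 - 1) ij.swap.1) *
            (Nat.choose (p + ij.swap.2 - 1) ij.swap.2) * SB p ij.swap.swap = _
    simp only [Prod.fst_swap, Prod.snd_swap, Prod.swap_swap]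
    rw [neg_one_pow_eq ij.1 ij.2 (by omega)]
    ring
  rw [step1, step2, ← two_mul]
  congr 1
  have step3 : (∑ ij ∈ Finset.HasAntidiagonal.antidiagonal (q - 1),
          (-1 : ℝ) ^ ij.2 * (Nat.choose (p + ij.1 - 1) ij.1) *
            (Nat.choose (p + ij.2 - 1) ij.2) * SB p ij)
      = ∑ u ∈ Finset.Ico p (2*p+q-1),
          (∑ ij ∈ Finset.HasAntidiagonal.antidiagonal (q - 1),
            (-1 : ℝ) ^ ij.2 * (Nat.choose (p + ij.1 - 1) ij.1) *
              (Nat.choose (p + ij.2 - 1) ij.2) * (Nat.choose (u-1) (p+ij.1-1)))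
            * zeta2 u (2*p+q-1-u) := by
    have h1 : ∀ ij ∈ Finset.HasAntidiagonal.antidiagonal (q-1),
        (-1 : ℝ) ^ ij.2 * (Nat.choose (p + ij.1 - 1) ij.1) *
            (Nat.choose (p + ij.2 - 1) ij.2) * SB p ij
        = ∑ u ∈ Finset.Ico p (2*p+q-1),
            (-1 : ℝ) ^ ij.2 * (Nat.choose (p + ij.1 - 1) ij.1) *
              (Nat.choose (p + ij.2 - 1) ij.2) *
              ((Nat.choose (u-1) (p+ij.1-1) : ℝ) * zeta2 u (2*p+q-1-u)) := by
      intro ij hij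
      have hmem : ij.1 + ij.2 = q - 1 := Finset.HasAntidiagonal.mem_antidiagonal.mp hij
      rw [show SB p ij = ∑ u ∈ Finset.Ico p (2*p+q-1),
          (Nat.choose (u-1) (p+ij.1-1) : ℝ) * zeta2 u (2*p+q-1-u) from
        sum2_eq p q ij.1 ij.2 hp hq hmem]
      rw [Finset.mul_sum]
    rw [Finset.sum_congr rfl h1, Finset.sum_comm]
    apply Finset.sum_congr rfl
    intro u hu
    rw [Finset.sum_mul]
    apply Finset.sum_congr rfl
    intro ij hij
    ring
  rw [step3]
  have step4 : ∀ u ∈ Finset.Ico p (2*p+q-1),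
      (∑ ij ∈ Finset.HasAntidiagonal.antidiagonal (q - 1),
        (-1 : ℝ) ^ ij.2 * (Nat.choose (p + ij.1 - 1) ij.1) *
          (Nat.choose (p + ij.2 - 1) ij.2) * (Nat.choose (u-1) (p+ij.1-1)))
        * zeta2 u (2*p+q-1-u)
      = ((Nat.choose (u-1) (p-1) : ℝ) * (Nat.choose (2*p+q-2-u) (q-1))) * zeta2 u (2*p+q-1-u) := by
    intro u hu
    have hu' := Finset.mem_Ico.mp hu
    rw [inner_eq p q u hp hq hqodd hu'.1 hu'.2]
  rw [Finset.sum_congr rfl step4]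
  exact final_eq p q hp hq

theorem stmt17 (q p : ℕ) (hq : 0 < q) (hp : 2 ≤ p) :
    (1 - (-1 : ℝ) ^ q) *
        ∑ ij ∈ Finset.HasAntidiagonal.antidiagonal (p - 1),
          (Nat.choose (p + ij.1 - 1) ij.1 : ℝ) * (Nat.choose (q + ij.2 - 1) ij.2) *
            zeta2 (p + ij.1) (q + ij.2) =
      ∑ ij ∈ Finset.HasAntidiagonal.antidiagonal (q - 1),
        (-1 : ℝ) ^ ij.2 * (Nat.choose (p + ij.1 - 1) ij.1) *
          (Nat.choose (p + ij.2 - 1) ij.2) * zeta1 (p + ij.1) * zeta1 (p + ij.2) ∧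
    (q % 2 = 0 →
      (∑ ij ∈ Finset.HasAntidiagonal.antidiagonal (q - 1),
        (-1 : ℝ) ^ ij.2 * (Nat.choose (p + ij.1 - 1) ij.1) *
          (Nat.choose (p + ij.2 - 1) ij.2) * zeta1 (p + ij.1) * zeta1 (p + ij.2)) = 0) := by
  constructor
  · rcases Nat.mod_two_eq_zero_or_one q with he | ho
    · have h0 : ((-1:ℝ))^q = 1 := Even.neg_one_pow (Nat.even_iff.mpr he)
      rw [h0, rhs_zero p q hq he]
      ring
    · have h1 : ((-1:ℝ))^q = -1 := Odd.neg_one_pow (Nat.odd_iff.mpr ho)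
      rw [h1, main_odd p q ho hp]
      ring
  · intro he
    exact rhs_zero p q hq he
end
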